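/- arXiv:1907.03725 — 5 statements merged into one kernel-verified Lean document; each statement's English description precedes it below -/
import Mathlib

section
/- For all real numbers a and b with a ≤ b and any real p ≥ 1, one has |a - b|^p ≤ 2^(p-1) * (|b|^p * sign(b) - |a|^p * sign(a)), where sign(x) = 1 if x > 0, -1 if x < 0, and 0 if x = 0. -/
/-! Write `φ(x) = |x|^p sign x`; it is odd and equals `x^p` on `[0, ∞)`. When `a ≤ b` have the
same sign, superadditivity of `t ↦ t^p` on `[0, ∞)` gives `(b - a)^p ≤ φ(b) - φ(a)`, and the factor
`2^(p-1) ≥ 1` only helps. When `a < 0 < b`, `φ(b) - φ(a) = b^p + (-a)^p`, and the claim is the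
convexity bound `(x + y)^p ≤ 2^(p-1) (x^p + y^p)`. -/

namespace Real

lemma rpow_add_le_mul_rpow_add_rpow {x y p : ℝ} (hx : 0 ≤ x) (hy : 0 ≤ y) (hp : 1 ≤ p) :
    (x + y) ^ p ≤ 2 ^ (p - 1) * (x ^ p + y ^ p) := by
  lift x to NNReal using hx
  lift y to NNReal using hy
  exact_mod_cast NNReal.rpow_add_le_mul_rpow_add_rpow x y hp

noncomputable def signedRpow (p x : ℝ) : ℝ := |x| ^ p * sign x

lemma signedRpow_neg (p x : ℝ) : signedRpow p (-x) = -signedRpow p x := by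
  simp only [signedRpow, abs_neg, sign_neg, mul_neg]

lemma signedRpow_of_nonneg {p x : ℝ} (hp : p ≠ 0) (hx : 0 ≤ x) : signedRpow p x = x ^ p := by
  rcases hx.eq_or_lt with rfl | hx
  · simp [signedRpow, zero_rpow hp]
  · simp [signedRpow, abs_of_pos hx, sign_of_pos hx]

lemma rpow_sub_le_signedRpow_sub_of_nonneg {a b p : ℝ} (ha : 0 ≤ a) (hab : a ≤ b) (hp : 1 ≤ p) :
    (b - a) ^ p ≤ signedRpow p b - signedRpow p a := by
  have hp0 : p ≠ 0 := by positivity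
  rw [signedRpow_of_nonneg hp0 (ha.trans hab), signedRpow_of_nonneg hp0 ha]
  have := add_rpow_le_rpow_add (sub_nonneg.2 hab) ha hp
  rw [sub_add_cancel] at this
  linarith

lemma rpow_sub_le_signedRpow_sub_of_nonpos {a b p : ℝ} (hb : b ≤ 0) (hab : a ≤ b) (hp : 1 ≤ p) :
    (b - a) ^ p ≤ signedRpow p b - signedRpow p a := by
  have := rpow_sub_le_signedRpow_sub_of_nonneg (neg_nonneg.2 hb) (neg_le_neg hab) hp
  rwa [signedRpow_neg, signedRpow_neg, neg_sub_neg, neg_sub_neg] at this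

lemma rpow_sub_le_two_rpow_mul_signedRpow_sub {a b p : ℝ} (hab : a ≤ b) (hp : 1 ≤ p) :
    (b - a) ^ p ≤ 2 ^ (p - 1) * (signedRpow p b - signedRpow p a) := by
  have h2 : (1 : ℝ) ≤ 2 ^ (p - 1) := one_le_rpow (by norm_num) (by linarith)
  have weaken : (b - a) ^ p ≤ signedRpow p b - signedRpow p a →
      (b - a) ^ p ≤ 2 ^ (p - 1) * (signedRpow p b - signedRpow p a) := fun h =>
    h.trans (le_mul_of_one_le_left ((rpow_nonneg (sub_nonneg.2 hab) p).trans h) h2)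
  rcases le_or_gt 0 a with ha | ha
  · exact weaken (rpow_sub_le_signedRpow_sub_of_nonneg ha hab hp)
  rcases le_or_gt b 0 with hb | hb
  · exact weaken (rpow_sub_le_signedRpow_sub_of_nonpos hb hab hp)
  have hp0 : p ≠ 0 := by positivity
  have hφa : signedRpow p a = -(-a) ^ p := by
    rw [← signedRpow_of_nonneg hp0 (neg_nonneg.2 ha.le), signedRpow_neg, neg_neg]
  rw [signedRpow_of_nonneg hp0 hb.le, hφa, sub_neg_eq_add, sub_eq_add_neg]
  exact rpow_add_le_mul_rpow_add_rpow hb.le (neg_nonneg.2 ha.le) hp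

end Real

theorem stmt_0 (a b p : ℝ) (hab : a ≤ b) (hp : 1 ≤ p) :
    |a - b| ^ p ≤ 2 ^ (p - 1) * (|b| ^ p * Real.sign b - |a| ^ p * Real.sign a) := by
  rw [abs_sub_comm, abs_of_nonneg (sub_nonneg.2 hab)]
  exact Real.rpow_sub_le_two_rpow_mul_signedRpow_sub hab hp
end

section
/- Let D ⊆ ℝⁿ be a measurable set and p ≥ 1. Define on L^p(D, ℝ) the partial order x ⪯ y iff x(ξ) ≤ y(ξ) for almost every ξ ∈ D, and set φ(x) := 2^(p−1) ∫_D |x(z)|^p sign(x(z)) dz and d(x,y) := ‖x − y‖_{L^p}^p. Then for any x, y ∈ L^p(D) with x ⪯ y, one has 0 ≤ d(x,y) ≤ φ(y) − φ(x). -/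
/-!
Pointwise, for `a ≤ b` and `q ≥ 1`, `(b - a) ^ q ≤ 2 ^ (q - 1) (φ b - φ a)` with
`φ t = |t| ^ q sign t`. If `a` and `b` have the same sign this follows from superadditivity
`u ^ q + (v - u) ^ q ≤ v ^ q` of the convex power (and `2 ^ (q - 1) ≥ 1`); if `a < 0 < b` it is
the convexity bound `(b + |a|) ^ q ≤ 2 ^ (q - 1) (b ^ q + |a| ^ q)`. Integrating over the
a.e. inequality `x ≤ y` gives the claim, since `‖x - y‖ ^ q = ∫ |x - y| ^ q`.
-/

open MeasureTheory ENNReal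

namespace Real

lemma abs_rpow_mul_sign_of_nonneg {q t : ℝ} (hq : q ≠ 0) (ht : 0 ≤ t) :
    |t| ^ q * sign t = t ^ q := by
  rcases ht.eq_or_lt with rfl | ht
  · simp [zero_rpow hq]
  · rw [sign_of_pos ht, abs_of_pos ht, mul_one]

lemma abs_rpow_mul_sign_of_nonpos {q t : ℝ} (hq : q ≠ 0) (ht : t ≤ 0) :
    |t| ^ q * sign t = -(-t) ^ q := by
  rw [← abs_rpow_mul_sign_of_nonneg hq (neg_nonneg.2 ht), abs_neg, sign_neg, mul_neg, neg_neg]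

lemma abs_abs_rpow_mul_sign_le (q t : ℝ) : |(|t| ^ q * sign t)| ≤ |t| ^ q := by
  rw [abs_mul, abs_of_nonneg (rpow_nonneg (abs_nonneg t) q)]
  refine mul_le_of_le_one_right (rpow_nonneg (abs_nonneg t) q) ?_
  rcases sign_apply_eq t with h | h | h <;> simp [h]

@[fun_prop]
lemma measurable_sign : Measurable sign :=
  Measurable.ite measurableSet_Iio measurable_const
    (Measurable.ite measurableSet_Ioi measurable_const measurable_const)

lemma rpow_add_le_two_rpow_mul_add_rpow {q a b : ℝ} (ha : 0 ≤ a) (hb : 0 ≤ b) (hq : 1 ≤ q) :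
    (a + b) ^ q ≤ 2 ^ (q - 1) * (a ^ q + b ^ q) := by
  lift a to NNReal using ha
  lift b to NNReal using hb
  exact_mod_cast NNReal.rpow_add_le_mul_rpow_add_rpow a b hq

lemma rpow_sub_le_two_rpow_mul_sub_rpow {q u v : ℝ} (hq : 1 ≤ q) (hu : 0 ≤ u) (huv : u ≤ v) :
    (v - u) ^ q ≤ 2 ^ (q - 1) * (v ^ q - u ^ q) := by
  have hsuper : u ^ q + (v - u) ^ q ≤ v ^ q := by
    simpa using add_rpow_le_rpow_add hu (sub_nonneg.2 huv) hq
  have htwo : (1 : ℝ) ≤ 2 ^ (q - 1) := one_le_rpow (by norm_num) (by linarith)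
  have hgap : 0 ≤ v ^ q - u ^ q := by linarith [rpow_nonneg (sub_nonneg.2 huv) q]
  calc (v - u) ^ q ≤ v ^ q - u ^ q := by linarith
    _ ≤ 2 ^ (q - 1) * (v ^ q - u ^ q) := le_mul_of_one_le_left hgap htwo

lemma abs_sub_rpow_le_two_rpow_mul_sub {q a b : ℝ} (hq : 1 ≤ q) (hab : a ≤ b) :
    |a - b| ^ q ≤ 2 ^ (q - 1) * (|b| ^ q * sign b) - 2 ^ (q - 1) * (|a| ^ q * sign a) := by
  have hq0 : q ≠ 0 := by positivity
  rw [abs_sub_comm, abs_of_nonneg (sub_nonneg.2 hab), ← mul_sub]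
  rcases le_or_gt 0 a with ha | ha
  · rw [abs_rpow_mul_sign_of_nonneg hq0 ha, abs_rpow_mul_sign_of_nonneg hq0 (ha.trans hab)]
    exact rpow_sub_le_two_rpow_mul_sub_rpow hq ha hab
  rcases le_or_gt b 0 with hb | hb
  · rw [abs_rpow_mul_sign_of_nonpos hq0 hb, abs_rpow_mul_sign_of_nonpos hq0 ha.le]
    have := rpow_sub_le_two_rpow_mul_sub_rpow hq (neg_nonneg.2 hb) (neg_le_neg hab)
    convert this using 2 <;> ring
  · rw [abs_rpow_mul_sign_of_nonneg hq0 hb.le, abs_rpow_mul_sign_of_nonpos hq0 ha.le,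
      sub_neg_eq_add, sub_eq_add_neg]
    exact rpow_add_le_two_rpow_mul_add_rpow hb.le (neg_nonneg.2 ha.le) hq

end Real

section

variable {α : Type*} [MeasurableSpace α] {μ : Measure α} {p : ℝ≥0∞}

lemma MeasureTheory.MemLp.integrable_abs_rpow_mul_sign {f : α → ℝ} (hf : MemLp f p μ)
    (hp₀ : p ≠ 0) (hp : p ≠ ⊤) :
    Integrable (fun z ↦ |f z| ^ p.toReal * Real.sign (f z)) μ := by
  refine (hf.integrable_norm_rpow hp₀ hp).mono' ?_ (.of_forall fun z ↦ ?_)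
  · have hφ : Measurable fun t : ℝ ↦ |t| ^ p.toReal * Real.sign t := by fun_prop
    exact (hφ.comp_aemeasurable hf.aemeasurable).aestronglyMeasurable
  · exact Real.abs_abs_rpow_mul_sign_le _ _

lemma MeasureTheory.Lp.norm_rpow_toReal_eq_integral {E : Type*} [NormedAddCommGroup E]
    (f : Lp E p μ) (hp₀ : p ≠ 0) (hp : p ≠ ⊤) :
    ‖f‖ ^ p.toReal = ∫ z, ‖f z‖ ^ p.toReal ∂μ := by
  rw [Lp.norm_def, toReal_eLpNorm (Lp.aestronglyMeasurable f),
    lpNorm_eq_integral_norm_rpow_toReal hp₀ hp (Lp.aestronglyMeasurable f),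
    Real.rpow_inv_rpow (integral_nonneg fun _ ↦ by positivity) (toReal_ne_zero.2 ⟨hp₀, hp⟩)]

lemma MeasureTheory.Lp.norm_sub_rpow_le_of_ae_le (hp : 1 ≤ p) (hp' : p ≠ ⊤)
    {x y : Lp ℝ p μ} (hxy : ∀ᵐ z ∂μ, x z ≤ y z) :
    ‖x - y‖ ^ p.toReal ≤
      2 ^ (p.toReal - 1) * ∫ z, |y z| ^ p.toReal * Real.sign (y z) ∂μ
        - 2 ^ (p.toReal - 1) * ∫ z, |x z| ^ p.toReal * Real.sign (x z) ∂μ := by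
  have hp₀ : p ≠ 0 := (one_pos.trans_le hp).ne'
  have hq : 1 ≤ p.toReal := by simpa using toReal_mono hp' hp
  have hφx := (Lp.memLp x).integrable_abs_rpow_mul_sign hp₀ hp'
  have hφy := (Lp.memLp y).integrable_abs_rpow_mul_sign hp₀ hp'
  have hsub : (fun z ↦ ‖(x - y) z‖ ^ p.toReal) =ᵐ[μ] fun z ↦ |x z - y z| ^ p.toReal := by
    filter_upwards [Lp.coeFn_sub x y] with z hz
    rw [hz, Pi.sub_apply, Real.norm_eq_abs]
  rw [Lp.norm_rpow_toReal_eq_integral _ hp₀ hp', integral_congr_ae hsub, ← integral_const_mul,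
    ← integral_const_mul, ← integral_sub (hφy.const_mul _) (hφx.const_mul _)]
  refine integral_mono_ae (((Lp.memLp (x - y)).integrable_norm_rpow hp₀ hp').congr hsub)
    ((hφy.const_mul _).sub (hφx.const_mul _)) ?_
  filter_upwards [hxy] with z hz
  exact Real.abs_sub_rpow_le_two_rpow_mul_sub hq hz

end

theorem stmt_2_general (n : ℕ) (D : Set (Fin n → ℝ))
    (p : ℝ≥0∞) (hp : 1 ≤ p) (hp' : p ≠ ⊤)
    (x y : Lp ℝ p (volume.restrict D))
    (hxy : ∀ᵐ ξ ∂(volume.restrict D), x ξ ≤ y ξ) :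
    0 ≤ ‖x - y‖ ^ p.toReal ∧
      ‖x - y‖ ^ p.toReal ≤
        (2 ^ (p.toReal - 1) * ∫ z, |y z| ^ p.toReal * Real.sign (y z) ∂(volume.restrict D))
        - (2 ^ (p.toReal - 1) * ∫ z, |x z| ^ p.toReal * Real.sign (x z) ∂(volume.restrict D)) :=
  ⟨Real.rpow_nonneg toReal_nonneg _, Lp.norm_sub_rpow_le_of_ae_le hp hp' hxy⟩

theorem stmt_2 (n : ℕ) (D : Set (Fin n → ℝ)) (hD : MeasurableSet D)
    (p : ℝ≥0∞) (hp : 1 ≤ p) (hp' : p ≠ ⊤)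
    (x y : Lp ℝ p (volume.restrict D))
    (hxy : ∀ᵐ ξ ∂(volume.restrict D), x ξ ≤ y ξ) :
    0 ≤ ‖x - y‖ ^ p.toReal ∧
      ‖x - y‖ ^ p.toReal ≤
        (2 ^ (p.toReal - 1) * ∫ z, |y z| ^ p.toReal * Real.sign (y z) ∂(volume.restrict D))
        - (2 ^ (p.toReal - 1) * ∫ z, |x z| ^ p.toReal * Real.sign (x z) ∂(volume.restrict D)) :=
  stmt_2_general n D p hp hp' x y hxy
end

section
/- Let (E, 𝓔) be a measurable space, Q a Markov kernel on E, and 𝒱 : E → [1,∞) measurable with Q𝒱 ≤ λ𝒱 + K for some λ ∈ (0,1) and K > 0. Fix M > max(K/(1−λ), 1) and set r := (λ + K/M)^{-1} > 1. Let (Z_n) be a Markov chain with kernel Q and τ_C := inf{n ≥ 1 : Z_n ∈ C} for C := {𝒱 ≤ M}. Then for any starting point x ∉ C, E_x[r^{τ_C}] ≤ 𝒱(x), and for any starting point x ∈ C, E_x[r^{τ_C}] ≤ r·(Q𝒱)(x). -/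
/-!
On the sets `{τ > n}` the chain stays outside `C = {V ≤ M}`, where the drift condition improves to
`Q𝒱 ≤ r⁻¹ 𝒱`. Hence `E[r^τ; τ ≤ n] + r^n E[𝒱(Z n); τ > n]` is nonincreasing in `n` (from `n = 0` if
`x ∉ C`, from `n = 1` in general), and since `𝒱 ≥ 1` it dominates `r^n P(τ > n)`, which forces
`τ < ∞` a.s. and bounds `E[r^τ]` by its value at `n = 0`, namely `𝒱(x)`, resp. at `n = 1`, which is
at most `r E[𝒱(Z 1)] = r (Q𝒱)(x)`.
-/

open MeasureTheory ProbabilityTheory Filter Set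
open scoped ENNReal Topology

section

variable {E Ω : Type*}

abbrev chainPast [MeasurableSpace E] (Z : ℕ → Ω → E) (n : ℕ) : MeasurableSpace Ω :=
  MeasurableSpace.comap (fun ω (i : Fin (n + 1)) => Z i ω) inferInstance

def IsMarkovChain [MeasurableSpace E] [MeasurableSpace Ω] (μ : Measure Ω) (Q : Kernel E E)
    (Z : ℕ → Ω → E) : Prop :=
  ∀ (n : ℕ) (A : Set E), MeasurableSet A →
    μ[fun ω => A.indicator (fun _ => (1 : ℝ)) (Z (n + 1) ω) | chainPast Z n]
      =ᵐ[μ] fun ω => (Q (Z n ω) A).toReal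

section MarkovProperty

variable [MeasurableSpace E] [MeasurableSpace Ω] {μ : Measure Ω} [IsFiniteMeasure μ]
  {Q : Kernel E E} [IsFiniteKernel Q] {Z : ℕ → Ω → E}

lemma chainPast_le (hZ : ∀ n, Measurable (Z n)) (n : ℕ) : chainPast Z n ≤ ‹MeasurableSpace Ω› :=
  (measurable_pi_lambda (fun ω (i : Fin (n + 1)) => Z i ω) fun i => hZ i).comap_le

lemma IsMarkovChain.map_restrict_eq_bind (hQZ : IsMarkovChain μ Q Z)
    (hZ : ∀ n, Measurable (Z n)) {n : ℕ} {A : Set Ω} (hA : MeasurableSet[chainPast Z n] A) :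
    (μ.restrict A).map (Z (n + 1)) = (μ.restrict A).bind fun ω => Q (Z n ω) := by
  have hle := chainPast_le hZ n
  have hQZn : Measurable fun ω => Q (Z n ω) := Q.measurable.comp (hZ n)
  ext B hB
  rw [Measure.map_apply (hZ _) hB, Measure.bind_apply hB hQZn.aemeasurable]
  have hfin : ∫⁻ ω in A, Q (Z n ω) B ∂μ ≠ ∞ := by
    refine ((lintegral_mono fun ω => Q.measure_le_bound _ B).trans_lt ?_).ne
    simp [ENNReal.mul_lt_top, Q.bound_lt_top]
  have hind : (fun ω => B.indicator (fun _ => (1 : ℝ)) (Z (n + 1) ω))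
      = (Z (n + 1) ⁻¹' B).indicator fun _ => 1 := rfl
  refine (ENNReal.toReal_eq_toReal_iff' (measure_ne_top _ _) hfin).mp ?_
  calc (μ.restrict A (Z (n + 1) ⁻¹' B)).toReal
      = ∫ ω in A, B.indicator (fun _ => (1 : ℝ)) (Z (n + 1) ω) ∂μ := by
        rw [hind, integral_indicator_const _ (hZ _ hB)]
        simp [Measure.real]
    _ = ∫ ω in A, (Q (Z n ω) B).toReal ∂μ := by
        rw [← setIntegral_condExp hle _ hA]
        · exact setIntegral_congr_ae (hle _ hA) ((hQZ n B hB).mono fun ω h _ => h)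
        · rw [hind]
          exact (integrable_const (1 : ℝ)).indicator (hZ _ hB)
    _ = (∫⁻ ω in A, Q (Z n ω) B ∂μ).toReal :=
        integral_toReal (Q.measurable_coe hB |>.comp (hZ n)).aemeasurable
          (Eventually.of_forall fun ω => measure_lt_top _ _)

lemma IsMarkovChain.setLIntegral_comp_succ (hQZ : IsMarkovChain μ Q Z)
    (hZ : ∀ n, Measurable (Z n)) {n : ℕ} {A : Set Ω} (hA : MeasurableSet[chainPast Z n] A)
    {g : E → ℝ≥0∞} (hg : Measurable g) :
    ∫⁻ ω in A, g (Z (n + 1) ω) ∂μ = ∫⁻ ω in A, ∫⁻ y, g y ∂Q (Z n ω) ∂μ := by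
  rw [← lintegral_map hg (hZ _), hQZ.map_restrict_eq_bind hZ hA,
    Measure.lintegral_bind (μ := fun ω => Q (Z n ω)) (Q.measurable.comp (hZ n)).aemeasurable
      hg.aemeasurable]

end MarkovProperty

section ReturnTime

variable (C : Set E) (Z : ℕ → Ω → E)

noncomputable def returnTime (ω : Ω) : ℕ∞ := ⨅ (m : ℕ) (_ : 1 ≤ m ∧ Z m ω ∈ C), (m : ℕ∞)

def noReturn (n : ℕ) : Set Ω := {ω | ∀ m, 1 ≤ m → m ≤ n → Z m ω ∉ C}

def returnAt (n : ℕ) : Set Ω := noReturn C Z n ∩ Z (n + 1) ⁻¹' C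

variable {C Z}

@[simp]
lemma noReturn_zero : noReturn C Z 0 = univ :=
  eq_univ_of_forall fun _ m h1 h2 => absurd (h1.trans h2) (by omega)

lemma noReturn_succ (n : ℕ) : noReturn C Z (n + 1) = noReturn C Z n \ Z (n + 1) ⁻¹' C := by
  ext ω
  simp only [noReturn, mem_ofPred_eq, Set.mem_sdiff]
  refine ⟨fun h => ⟨fun m h1 h2 => h m h1 (by omega), h _ (by omega) le_rfl⟩,
    fun ⟨h, hn⟩ m h1 h2 => ?_⟩
  rcases Nat.lt_or_eq_of_le h2 with h2 | rfl
  exacts [h m h1 (by omega), hn]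

lemma notMem_of_mem_noReturn {n : ℕ} (hn : 1 ≤ n) {ω : Ω} (hω : ω ∈ noReturn C Z n) :
    Z n ω ∉ C :=
  hω n hn le_rfl

lemma measurableSet_noReturn [MeasurableSpace E] (hC : MeasurableSet C) (n : ℕ) :
    MeasurableSet[chainPast Z n] (noReturn C Z n) := by
  have : noReturn C Z n = ⋂ (m : Fin (n + 1)) (_ : 1 ≤ (m : ℕ)), {ω | Z m ω ∈ C}ᶜ := by
    ext ω
    simp only [noReturn, mem_ofPred_eq, mem_iInter, mem_compl_iff]
    exact ⟨fun h m hm => h m hm m.is_le, fun h m h1 h2 => h ⟨m, by omega⟩ h1⟩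
  rw [this]
  refine .iInter fun m => .iInter fun _ => .compl ?_
  exact ⟨_, (measurable_pi_apply m) hC, rfl⟩

lemma returnTime_eq_of_mem_returnAt {n : ℕ} {ω : Ω} (h : ω ∈ returnAt C Z n) :
    returnTime C Z ω = (n + 1 : ℕ) := by
  refine le_antisymm (iInf₂_le _ ⟨by omega, h.2⟩) (le_iInf₂ fun m hm => ?_)
  by_contra! hlt
  exact h.1 m hm.1 (Nat.lt_succ_iff.mp (by exact_mod_cast hlt)) hm.2

lemma exists_mem_returnAt {ω : Ω} (h : ω ∉ ⋂ n, noReturn C Z n) : ∃ n, ω ∈ returnAt C Z n := by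
  classical
  have hex : ∃ m, 1 ≤ m ∧ Z m ω ∈ C := by
    simp only [mem_iInter, noReturn, mem_ofPred_eq, not_forall, not_not] at h
    obtain ⟨n, m, h1, -, hm⟩ := h
    exact ⟨m, h1, hm⟩
  refine ⟨Nat.find hex - 1, fun m h1 h2 hm => ?_, ?_⟩
  · exact Nat.find_min hex (by omega) ⟨h1, hm⟩
  · have := Nat.find_spec hex
    rw [mem_preimage, Nat.sub_add_cancel this.1]
    exact this.2

end ReturnTime

/-- `R ^ t` for `t : ℕ∞`; for `1 < R` it gives `R ^ ⊤ = ⊤`. -/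
noncomputable def powENat (R : ℝ≥0∞) (t : ℕ∞) : ℝ≥0∞ :=
  ⨆ n : ℕ, if (n : ℕ∞) ≤ t then R ^ n else 0

lemma powENat_le_pow {R : ℝ≥0∞} (hR : 1 ≤ R) (k : ℕ) : powENat R k ≤ R ^ k :=
  iSup_le fun n => by
    split_ifs with h
    · exact pow_le_pow_right₀ hR (by exact_mod_cast h)
    · exact zero_le

section GeometricDrift

variable [MeasurableSpace Ω] {μ : Measure Ω} {C : Set E} {Z : ℕ → Ω → E} {W : E → ℝ≥0∞}
  {R : ℝ≥0∞}

variable (μ C Z W R) in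
/-- `E[R ^ τ; τ ≤ n] + R ^ n E[W (Z n); n < τ]` for the return time `τ` to `C`: under the drift
condition it is nonincreasing in `n` from `n = 1` on, and from `n = 0` if `Z 0 ∉ C`. -/
noncomputable def lyapunovSum (n : ℕ) : ℝ≥0∞ :=
  R ^ n * ∫⁻ ω in noReturn C Z n, W (Z n ω) ∂μ +
    ∑ k ∈ Finset.range n, R ^ (k + 1) * μ (returnAt C Z k)

section Drift

variable [MeasurableSpace E] {Q : Kernel E E}

lemma measure_returnAt_add_le (hZ : ∀ n, Measurable (Z n)) (hC : MeasurableSet C)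
    (hW : ∀ y, 1 ≤ W y) (n : ℕ) :
    μ (returnAt C Z n) + ∫⁻ ω in noReturn C Z (n + 1), W (Z (n + 1) ω) ∂μ ≤
      ∫⁻ ω in noReturn C Z n, W (Z (n + 1) ω) ∂μ := by
  rw [noReturn_succ, ← lintegral_inter_add_sdiff _ (noReturn C Z n) (hZ (n + 1) hC),
    ← setLIntegral_one]
  exact add_le_add_left (lintegral_mono fun _ => hW _) _

lemma lyapunovSum_succ_le [IsFiniteMeasure μ] [IsFiniteKernel Q] (hQZ : IsMarkovChain μ Q Z)
    (hZ : ∀ n, Measurable (Z n)) (hC : MeasurableSet C) (hWm : Measurable W)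
    (hW : ∀ y, 1 ≤ W y) (hdrift : ∀ y ∉ C, R * ∫⁻ z, W z ∂Q y ≤ W y) {n : ℕ}
    (hout : ∀ ω ∈ noReturn C Z n, Z n ω ∉ C) :
    lyapunovSum μ C Z W R (n + 1) ≤ lyapunovSum μ C Z W R n := by
  have hstep : R * ∫⁻ ω in noReturn C Z n, W (Z (n + 1) ω) ∂μ ≤
      ∫⁻ ω in noReturn C Z n, W (Z n ω) ∂μ := by
    have hA := measurableSet_noReturn (Z := Z) hC n
    rw [hQZ.setLIntegral_comp_succ hZ hA hWm]
    exact (lintegral_const_mul_le _ _).trans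
      (setLIntegral_mono' (chainPast_le hZ n _ hA) fun ω hω => hdrift _ (hout ω hω))
  calc lyapunovSum μ C Z W R (n + 1)
      = R ^ n * (R * (μ (returnAt C Z n) +
          ∫⁻ ω in noReturn C Z (n + 1), W (Z (n + 1) ω) ∂μ)) +
        ∑ k ∈ Finset.range n, R ^ (k + 1) * μ (returnAt C Z k) := by
        rw [lyapunovSum, Finset.sum_range_succ]; ring
    _ ≤ R ^ n * (R * ∫⁻ ω in noReturn C Z n, W (Z (n + 1) ω) ∂μ) +
        ∑ k ∈ Finset.range n, R ^ (k + 1) * μ (returnAt C Z k) := by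
        gcongr; exact measure_returnAt_add_le hZ hC hW n
    _ ≤ lyapunovSum μ C Z W R n := by
        rw [lyapunovSum]
        exact add_le_add_left (mul_le_mul_right hstep _) _

lemma lyapunovSum_le_of_le [IsFiniteMeasure μ] [IsFiniteKernel Q] (hQZ : IsMarkovChain μ Q Z)
    (hZ : ∀ n, Measurable (Z n)) (hC : MeasurableSet C) (hWm : Measurable W)
    (hW : ∀ y, 1 ≤ W y) (hdrift : ∀ y ∉ C, R * ∫⁻ z, W z ∂Q y ≤ W y) {n₀ : ℕ}
    (hout : ∀ ω ∈ noReturn C Z n₀, Z n₀ ω ∉ C) {N : ℕ} (hN : n₀ ≤ N) :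
    lyapunovSum μ C Z W R N ≤ lyapunovSum μ C Z W R n₀ := by
  induction N, hN using Nat.le_induction with
  | base => exact le_rfl
  | succ n hn ih =>
    refine (lyapunovSum_succ_le hQZ hZ hC hWm hW hdrift fun ω hω => ?_).trans ih
    rcases Nat.eq_zero_or_pos n with rfl | hpos
    · obtain rfl := Nat.le_zero.mp hn
      exact hout ω hω
    · exact notMem_of_mem_noReturn hpos hω

lemma lyapunovSum_one_le (hZ : ∀ n, Measurable (Z n)) (hC : MeasurableSet C)
    (hW : ∀ y, 1 ≤ W y) : lyapunovSum μ C Z W R 1 ≤ R * ∫⁻ ω, W (Z 1 ω) ∂μ := by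
  have hsplit := measure_returnAt_add_le (μ := μ) hZ hC hW 0
  simp only [noReturn_zero, Measure.restrict_univ, zero_add] at hsplit
  calc lyapunovSum μ C Z W R 1
      = R * (μ (returnAt C Z 0) + ∫⁻ ω in noReturn C Z 1, W (Z 1 ω) ∂μ) := by
        simp only [lyapunovSum, pow_one, Finset.range_one, Finset.sum_singleton, zero_add]
        ring
    _ ≤ R * ∫⁻ ω, W (Z 1 ω) ∂μ := mul_le_mul_right hsplit R

end Drift

lemma pow_mul_measure_noReturn_add_le (hW : ∀ y, 1 ≤ W y) (N : ℕ) :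
    R ^ N * μ (noReturn C Z N) + ∑ k ∈ Finset.range N, R ^ (k + 1) * μ (returnAt C Z k) ≤
      lyapunovSum μ C Z W R N := by
  rw [lyapunovSum, ← setLIntegral_one]
  gcongr with ω
  exact hW _

variable {n₀ : ℕ}

lemma measure_iInter_noReturn_eq_zero (hW : ∀ y, 1 ≤ W y) (hR : 1 < R)
    (hS : ∀ N, n₀ ≤ N → lyapunovSum μ C Z W R N ≤ lyapunovSum μ C Z W R n₀)
    (hfin : lyapunovSum μ C Z W R n₀ ≠ ∞) :
    μ (⋂ n, noReturn C Z n) = 0 := by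
  by_contra h
  have hbound : ∀ᶠ N in atTop, R ^ N * μ (⋂ n, noReturn C Z n) ≤ lyapunovSum μ C Z W R n₀ :=
    eventually_atTop.mpr ⟨n₀, fun N hN => calc
      R ^ N * μ (⋂ n, noReturn C Z n) ≤ R ^ N * μ (noReturn C Z N) :=
        mul_le_mul_right (measure_mono (iInter_subset _ N)) _
      _ ≤ lyapunovSum μ C Z W R N := le_self_add.trans (pow_mul_measure_noReturn_add_le hW N)
      _ ≤ lyapunovSum μ C Z W R n₀ := hS N hN⟩
  have hlim : Tendsto (fun N => R ^ N * μ (⋂ n, noReturn C Z n)) atTop (𝓝 ∞) := by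
    rw [← ENNReal.top_mul h]
    exact ENNReal.Tendsto.mul_const (ENNReal.tendsto_pow_atTop_nhds_top_iff.mpr hR)
      (Or.inl ENNReal.top_ne_zero)
  exact hfin (top_le_iff.mp (le_of_tendsto hlim hbound))

lemma tsum_le_lyapunovSum (hW : ∀ y, 1 ≤ W y)
    (hS : ∀ N, n₀ ≤ N → lyapunovSum μ C Z W R N ≤ lyapunovSum μ C Z W R n₀) :
    ∑' k, R ^ (k + 1) * μ (returnAt C Z k) ≤ lyapunovSum μ C Z W R n₀ :=
  ENNReal.tsum_le_of_sum_range_le fun N => calc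
    ∑ k ∈ Finset.range N, R ^ (k + 1) * μ (returnAt C Z k)
      ≤ ∑ k ∈ Finset.range (N + n₀), R ^ (k + 1) * μ (returnAt C Z k) :=
        Finset.sum_le_sum_of_subset (Finset.range_mono (by omega))
    _ ≤ lyapunovSum μ C Z W R (N + n₀) :=
        le_add_self.trans (pow_mul_measure_noReturn_add_le hW _)
    _ ≤ lyapunovSum μ C Z W R n₀ := hS _ (by omega)

lemma lintegral_powENat_returnTime_le (hW : ∀ y, 1 ≤ W y) (hR : 1 < R)
    (hS : ∀ N, n₀ ≤ N → lyapunovSum μ C Z W R N ≤ lyapunovSum μ C Z W R n₀)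
    (hfin : lyapunovSum μ C Z W R n₀ ≠ ∞) :
    ∫⁻ ω, powENat R (returnTime C Z ω) ∂μ ≤ lyapunovSum μ C Z W R n₀ := by
  have hret : ∀ᵐ ω ∂μ, ω ∈ ⋃ k, returnAt C Z k := by
    refine measure_mono_null (fun ω hω => ?_) (measure_iInter_noReturn_eq_zero hW hR hS hfin)
    by_contra h
    exact hω (mem_iUnion.mpr (exists_mem_returnAt h))
  conv_lhs => rw [← Measure.restrict_eq_self_of_ae_mem hret]
  calc _ ≤ ∑' k, ∫⁻ ω in returnAt C Z k, powENat R (returnTime C Z ω) ∂μ :=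
        lintegral_iUnion_le _ _
    _ ≤ ∑' k, R ^ (k + 1) * μ (returnAt C Z k) := by
        refine ENNReal.tsum_le_tsum fun k => ?_
        rw [← setLIntegral_const]
        refine setLIntegral_mono measurable_const fun ω hω => ?_
        rw [returnTime_eq_of_mem_returnAt hω]
        exact powENat_le_pow hR.le _
    _ ≤ lyapunovSum μ C Z W R n₀ := tsum_le_lyapunovSum hW hS

section Moments

variable [MeasurableSpace E] {Q : Kernel E E} [IsProbabilityMeasure μ] [IsFiniteKernel Q] {x : E}

theorem lintegral_powENat_returnTime_le_of_notMem (hQZ : IsMarkovChain μ Q Z)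
    (hZ : ∀ n, Measurable (Z n)) (hC : MeasurableSet C) (hWm : Measurable W)
    (hW : ∀ y, 1 ≤ W y) (hdrift : ∀ y ∉ C, R * ∫⁻ z, W z ∂Q y ≤ W y) (hR : 1 < R)
    (hZ0 : ∀ ω, Z 0 ω = x) (hx : x ∉ C) (hWx : W x ≠ ∞) :
    ∫⁻ ω, powENat R (returnTime C Z ω) ∂μ ≤ W x := by
  have hS0 : lyapunovSum μ C Z W R 0 = W x := by simp [lyapunovSum, hZ0]
  have hout : ∀ ω ∈ noReturn C Z 0, Z 0 ω ∉ C := fun ω _ => hZ0 ω ▸ hx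
  rw [← hS0]
  exact lintegral_powENat_returnTime_le hW hR
    (fun _ => lyapunovSum_le_of_le hQZ hZ hC hWm hW hdrift hout) (hS0 ▸ hWx)

theorem lintegral_powENat_returnTime_le_mul (hQZ : IsMarkovChain μ Q Z)
    (hZ : ∀ n, Measurable (Z n)) (hC : MeasurableSet C) (hWm : Measurable W)
    (hW : ∀ y, 1 ≤ W y) (hdrift : ∀ y ∉ C, R * ∫⁻ z, W z ∂Q y ≤ W y) (hR : 1 < R)
    (hR_top : R ≠ ∞) (hZ0 : ∀ ω, Z 0 ω = x) (hQWx : ∫⁻ y, W y ∂Q x ≠ ∞) :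
    ∫⁻ ω, powENat R (returnTime C Z ω) ∂μ ≤ R * ∫⁻ y, W y ∂Q x := by
  have hZ1 : ∫⁻ ω, W (Z 1 ω) ∂μ = ∫⁻ y, W y ∂Q x := by
    simpa [hZ0] using hQZ.setLIntegral_comp_succ hZ (n := 0) MeasurableSet.univ hWm
  have hS1 := hZ1 ▸ lyapunovSum_one_le (μ := μ) (R := R) hZ hC hW
  have hout : ∀ ω ∈ noReturn C Z 1, Z 1 ω ∉ C := fun _ => notMem_of_mem_noReturn le_rfl
  refine (lintegral_powENat_returnTime_le hW hR
    (fun _ => lyapunovSum_le_of_le hQZ hZ hC hWm hW hdrift hout) ?_).trans hS1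
  exact ne_top_of_le_ne_top (ENNReal.mul_ne_top hR_top hQWx) hS1

end Moments

end GeometricDrift

end

lemma add_div_lt_one {lam K M : ℝ} (hlam : lam < 1) (hM : K / (1 - lam) < M) (hM0 : 0 < M) :
    lam + K / M < 1 := by
  rw [div_lt_iff₀ (sub_pos.mpr hlam)] at hM
  have : K / M < 1 - lam := by rw [div_lt_iff₀ hM0]; linarith
  linarith

lemma mul_add_le_add_div_mul {lam K M v : ℝ} (hK : 0 ≤ K) (hM0 : 0 < M) (hv : M ≤ v) :
    lam * v + K ≤ (lam + K / M) * v := by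
  have : K ≤ K / M * v := by
    calc K = K / M * M := (div_mul_cancel₀ K hM0.ne').symm
      _ ≤ K / M * v := by gcongr
  linarith

lemma ofReal_inv_mul_lintegral_le {E : Type*} [MeasurableSpace E] {ν : Measure E} {V : E → ℝ}
    (hVint : Integrable V ν) (hV : ∀ y, 0 ≤ V y) {ρ c : ℝ} (hρ : 0 < ρ)
    (h : ∫ y, V y ∂ν ≤ ρ * c) :
    ENNReal.ofReal ρ⁻¹ * ∫⁻ y, ENNReal.ofReal (V y) ∂ν ≤ ENNReal.ofReal c := by
  rw [← ofReal_integral_eq_lintegral_ofReal hVint (ae_of_all _ hV),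
    ← ENNReal.ofReal_mul (inv_nonneg.mpr hρ.le)]
  exact ENNReal.ofReal_le_ofReal ((inv_mul_le_iff₀ hρ).mpr h)

theorem stmt_8 {E : Type*} [MeasurableSpace E]
    (Q : Kernel E E) [IsMarkovKernel Q]
    (V : E → ℝ) (hVmeas : Measurable V) (hV1 : ∀ x, 1 ≤ V x)
    (hVint : ∀ x, Integrable V (Q x))
    (lam K : ℝ) (hlam : lam ∈ Set.Ioo (0 : ℝ) 1) (hK : 0 < K)
    (hdrift : ∀ x, ∫ y, V y ∂(Q x) ≤ lam * V x + K)
    (M r : ℝ) (hM : max (K / (1 - lam)) 1 < M) (hr : r = (lam + K / M)⁻¹)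
    {Ω : Type*} [MeasurableSpace Ω] (μ : Measure Ω) [IsProbabilityMeasure μ]
    (Z : ℕ → Ω → E) (hZmeas : ∀ n, Measurable (Z n))
    (hMarkov : ∀ (n : ℕ) (A : Set E), MeasurableSet A →
      (μ[fun ω => Set.indicator A (fun _ => (1 : ℝ)) (Z (n + 1) ω) |
          MeasurableSpace.comap (fun ω (i : Fin (n + 1)) => Z i ω) inferInstance])
        =ᵐ[μ] fun ω => (Q (Z n ω) A).toReal)
    (x : E) (hZ0 : ∀ ω, Z 0 ω = x) :
    -- expected value of `r ^ τ_C` where `C = {V ≤ M}` and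
    -- `τ_C = inf {n ≥ 1 : Z n ∈ C}` (the supremum below equals `r ^ τ_C`, with value `∞`
    -- when the chain never returns to `C`, since `r > 1`)
    (¬ V x ≤ M →
      ∫⁻ ω, ⨆ n : ℕ,
          (if (n : ℕ∞) ≤ ⨅ (m : ℕ) (_ : 1 ≤ m ∧ V (Z m ω) ≤ M), (m : ℕ∞)
            then ENNReal.ofReal r ^ n else 0) ∂μ
        ≤ ENNReal.ofReal (V x)) ∧
    (V x ≤ M →
      ∫⁻ ω, ⨆ n : ℕ,
          (if (n : ℕ∞) ≤ ⨅ (m : ℕ) (_ : 1 ≤ m ∧ V (Z m ω) ≤ M), (m : ℕ∞)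
            then ENNReal.ofReal r ^ n else 0) ∂μ
        ≤ ENNReal.ofReal (r * ∫ y, V y ∂(Q x))) := by
  obtain ⟨hlam0, hlam1⟩ := hlam
  have hM0 : 0 < M := zero_lt_one.trans ((le_max_right _ _).trans_lt hM)
  have hρ0 : 0 < lam + K / M := by positivity
  have hR : 1 < ENNReal.ofReal r := by
    rw [ENNReal.one_lt_ofReal, hr]
    exact one_lt_inv₀ hρ0 |>.mpr (add_div_lt_one hlam1 ((le_max_left _ _).trans_lt hM) hM0)
  have hV0 (y : E) : 0 ≤ V y := zero_le_one.trans (hV1 y)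
  have hdrift' (y : E) (hy : y ∉ {y | V y ≤ M}) :
      ENNReal.ofReal r * ∫⁻ z, ENNReal.ofReal (V z) ∂Q y ≤ ENNReal.ofReal (V y) :=
    hr ▸ ofReal_inv_mul_lintegral_le (hVint y) hV0 hρ0
      ((hdrift y).trans (mul_add_le_add_div_mul hK.le hM0 (not_le.mp hy).le))
  have hC : MeasurableSet {y | V y ≤ M} := measurableSet_le hVmeas measurable_const
  have hWm : Measurable fun y => ENNReal.ofReal (V y) := ENNReal.measurable_ofReal.comp hVmeas
  have hW (y : E) : 1 ≤ ENNReal.ofReal (V y) := ENNReal.one_le_ofReal.mpr (hV1 y)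
  change (¬ V x ≤ M → ∫⁻ ω, powENat (ENNReal.ofReal r) (returnTime {y | V y ≤ M} Z ω) ∂μ ≤ _) ∧
    (V x ≤ M → ∫⁻ ω, powENat (ENNReal.ofReal r) (returnTime {y | V y ≤ M} Z ω) ∂μ ≤ _)
  refine ⟨fun hx => ?_, fun _ => ?_⟩
  · exact lintegral_powENat_returnTime_le_of_notMem (W := fun y => ENNReal.ofReal (V y))
      hMarkov hZmeas hC hWm hW hdrift' hR hZ0 hx ENNReal.ofReal_ne_top
  · rw [ENNReal.ofReal_mul (hr ▸ inv_pos.mpr hρ0).le,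
      ofReal_integral_eq_lintegral_ofReal (hVint x) (ae_of_all _ hV0)]
    exact lintegral_powENat_returnTime_le_mul hMarkov hZmeas hC hWm hW hdrift' hR
      ENNReal.ofReal_ne_top hZ0 (hVint x).lintegral_lt_top.ne
end

section
/- Let (E, 𝓔) be a measurable space, Q a Markov kernel, and 𝒱 : E → [1,∞) with Q𝒱 ≤ λ𝒱 + K for λ ∈ (0,1), K > 0. Fix M > max(K/(1−λ),1), set r := (λ + K/M)^{-1}, and suppose A ∈ 𝓔 satisfies inf_{x ∈ {𝒱 ≤ M}} Q(x,A) ≥ ε for some ε > 0. Then for any 1 < l < r^{(|log(1−ε)| ∧ log M)/(2 log M)} there exists C = C(λ,l,K,M,ε) > 0 such that E_x[l^{τ_A}] ≤ C 𝒱(x) for all x ∈ E, where τ_A := inf{n ≥ 1 : Z_n ∈ A}. -/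
/-!
Let `S = {V ≤ M}` and let `τ ≥ 1` be the first hitting time of `A`. If `w ≥ 0` and `h ≥ 1`
satisfy `w y * ∫ (1_A + 1_Aᶜ h) dQ(y) ≤ h y`, then `∏_{m < τ ∧ N} w(Z m)`, multiplied by
`h(Z N)` before `τ`, is a supermartingale, so `E_x ∏_{m < τ ∧ N} w(Z m) ≤ h x`.
Jensen and the drift give such a pair with `h = V ^ α` and `w = l² / β` on `S`, `w = l²` off `S`,
where `β = l² (λ M + K) ^ α`; the minorization gives one with `h` a constant `c` and `w = β` on
`S`, `w = 1` off `S`. The two weights multiply to `l²`, so Cauchy–Schwarz gives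
`E_x l ^ (τ ∧ N) ≤ (V(x) ^ α c) ^ (1/2) ≤ √c V(x)`. The exponent
`α = (|log (1 - ε)| ∧ log M) / log M` is what makes `l² (λ + K/M) ^ α ≤ 1` and `β (1 - ε) < 1`
hold together.
-/

open MeasureTheory ProbabilityTheory Set
open scoped ENNReal

noncomputable section

namespace MarkovChainDrift

theorem exists_exponent {lam K M ε l : ℝ} (hlam : 0 < lam) (hK : 0 ≤ K) (hM : 1 < M)
    (hε : 0 < ε) (hl1 : 1 < l)
    (hl2 : l < (lam + K / M)⁻¹ ^ ((|Real.log (1 - ε)| ⊓ Real.log M) / (2 * Real.log M))) :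
    ∃ α : ℝ, 0 < α ∧ α ≤ 1 ∧ l ^ 2 * (lam + K / M) ^ α ≤ 1
      ∧ l ^ 2 * (lam * M + K) ^ α * (1 - ε) < 1 := by
  set q := lam + K / M with hq_def
  have hq : 0 < q := by positivity
  have hlogM : 0 < Real.log M := Real.log_pos hM
  set α := (|Real.log (1 - ε)| ⊓ Real.log M) / Real.log M with hα
  have hα0 : 0 ≤ α := div_nonneg (le_min (abs_nonneg _) hlogM.le) hlogM.le
  replace hl2 : l < q⁻¹ ^ (α / 2) := by rwa [hα, div_div, mul_comm]
  have hα_pos : 0 < α := hα0.lt_of_ne fun h => by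
    rw [← h, zero_div, Real.rpow_zero] at hl2; linarith
  have hlq : l ^ 2 * q ^ α < 1 := by
    have : l ^ 2 < q⁻¹ ^ α := by
      calc l ^ 2 < (q⁻¹ ^ (α / 2)) ^ 2 := by gcongr
        _ = q⁻¹ ^ α := by
          rw [← Real.rpow_natCast, ← Real.rpow_mul (by positivity)]; norm_num
    rwa [Real.inv_rpow hq.le, ← one_div, lt_div_iff₀ (by positivity)] at this
  -- `M ^ α = exp (min (|log (1 - ε)|) (log M))` is at most `(1 - ε)⁻¹` when `ε < 1`
  have hMα : M ^ α * (1 - ε) ≤ 1 := by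
    rcases le_or_gt (1 - ε) 0 with h | h
    · nlinarith [Real.rpow_nonneg (by linarith : (0 : ℝ) ≤ M) α]
    · have hlog : Real.log (1 - ε) ≤ 0 := Real.log_nonpos h.le (by linarith)
      have : M ^ α ≤ (1 - ε)⁻¹ := by
        rw [Real.rpow_def_of_pos (by linarith), hα, mul_div_cancel₀ _ hlogM.ne',
          ← Real.exp_log (inv_pos.2 h), Real.log_inv, ← abs_of_nonpos hlog]
        exact Real.exp_le_exp.2 (min_le_left _ _)
      calc M ^ α * (1 - ε) ≤ (1 - ε)⁻¹ * (1 - ε) := by gcongr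
        _ = 1 := inv_mul_cancel₀ h.ne'
  refine ⟨α, hα_pos, div_le_one_of_le₀ (min_le_right _ _) hlogM.le, hlq.le, ?_⟩
  calc l ^ 2 * (lam * M + K) ^ α * (1 - ε) = l ^ 2 * q ^ α * (M ^ α * (1 - ε)) := by
        rw [show lam * M + K = q * M by rw [hq_def]; field_simp,
          Real.mul_rpow hq.le (by linarith)]
        ring
    _ ≤ l ^ 2 * q ^ α * 1 := by gcongr
    _ < 1 := by rwa [mul_one]

theorem exists_minorization_constant {β ε : ℝ} (hβε : β * (1 - ε) < 1) :
    ∃ c : ℝ, 1 ≤ c ∧ β * (ε + c * (1 - ε)) ≤ c := by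
  refine ⟨max 1 (β * ε / (1 - β * (1 - ε))), le_max_left _ _, ?_⟩
  have := (div_le_iff₀ (by linarith)).1 (le_max_right 1 (β * ε / (1 - β * (1 - ε))))
  nlinarith

theorem ite_mul_rpow_le_rpow {lam K M v α a b : ℝ} (hlam : 0 ≤ lam) (hK : 0 ≤ K) (hM : 0 < M)
    (hv : 1 ≤ v) (hα : 0 ≤ α) (ha : 0 ≤ a) (hb : 0 ≤ b) (hon : a * (lam * M + K) ^ α ≤ 1)
    (hoff : b * (lam + K / M) ^ α ≤ 1) :
    (if v ≤ M then a else b) * (lam * v + K) ^ α ≤ v ^ α := by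
  split_ifs with hvM
  · calc a * (lam * v + K) ^ α ≤ a * (lam * M + K) ^ α := by gcongr
      _ ≤ 1 := hon
      _ ≤ v ^ α := Real.one_le_rpow hv hα
  · have hlin : lam * v + K ≤ (lam + K / M) * v := by
      have : K ≤ K / M * v := by
        rw [div_mul_eq_mul_div, le_div_iff₀ hM]; nlinarith
      linarith
    calc b * (lam * v + K) ^ α ≤ b * ((lam + K / M) * v) ^ α := by gcongr
      _ = b * (lam + K / M) ^ α * v ^ α := by
          rw [Real.mul_rpow (by positivity) (by linarith), mul_assoc]
      _ ≤ 1 * v ^ α := by gcongr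
      _ = v ^ α := one_mul _

theorem ite_mul_add_mul_sub_le {p : Prop} [Decidable p] {t ε β c : ℝ} (ht : p → ε ≤ t)
    (ht0 : 0 ≤ t) (hβ : 0 ≤ β) (hc1 : 1 ≤ c) (hc : β * (ε + c * (1 - ε)) ≤ c) :
    (if p then β else 1) * (t + c * (1 - t)) ≤ c := by
  split_ifs with hp
  · calc β * (t + c * (1 - t)) ≤ β * (ε + c * (1 - ε)) :=
          mul_le_mul_of_nonneg_left
            (by nlinarith [mul_nonneg (sub_nonneg.2 (ht hp)) (sub_nonneg.2 hc1)]) hβ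
      _ ≤ c := hc
  · nlinarith

theorem lintegral_rpow_le_rpow_lintegral {α : Type*} [MeasurableSpace α] {ν : Measure α}
    [IsProbabilityMeasure ν] {f : α → ℝ≥0∞} (hf : AEMeasurable f ν) {p : ℝ} (hp0 : 0 ≤ p)
    (hp1 : p ≤ 1) : ∫⁻ a, f a ^ p ∂ν ≤ (∫⁻ a, f a ∂ν) ^ p := by
  simpa using ENNReal.lintegral_mul_norm_pow_le (g := fun _ => 1) hf aemeasurable_const hp0
    (sub_nonneg.2 hp1) (add_sub_cancel p 1)

variable {E Ω : Type*}

def path (Z : ℕ → Ω → E) (n : ℕ) (ω : Ω) : Fin (n + 1) → E := fun i => Z i ω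

def avoiding (Z : ℕ → Ω → E) (A : Set E) (m : ℕ) : Set Ω := ⋂ k ∈ Finset.Icc 1 m, Z k ⁻¹' Aᶜ

open Classical in
def killedFactor (Z : ℕ → Ω → E) (A : Set E) (w : E → ℝ≥0∞) (m : ℕ) (ω : Ω) : ℝ≥0∞ :=
  if ω ∈ avoiding Z A m then w (Z m ω) else 1

/-- `killedProd Z A w N ω = ∏_{m < min (τ, N)} w (Z m ω)` for `τ = firstHit Z A ω`. -/
def killedProd (Z : ℕ → Ω → E) (A : Set E) (w : E → ℝ≥0∞) (N : ℕ) (ω : Ω) : ℝ≥0∞ :=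
  ∏ m ∈ Finset.range N, killedFactor Z A w m ω

def firstHit (Z : ℕ → Ω → E) (A : Set E) (ω : Ω) : ℕ∞ :=
  ⨅ (m : ℕ) (_ : 1 ≤ m ∧ Z m ω ∈ A), (m : ℕ∞)

section Killed

variable {Z : ℕ → Ω → E} {A : Set E}

theorem mem_avoiding {m : ℕ} {ω : Ω} :
    ω ∈ avoiding Z A m ↔ ∀ k, 1 ≤ k → k ≤ m → Z k ω ∉ A := by
  simp [avoiding, and_imp]

theorem mem_avoiding_succ {m : ℕ} {ω : Ω} :
    ω ∈ avoiding Z A (m + 1) ↔ ω ∈ avoiding Z A m ∧ Z (m + 1) ω ∉ A := by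
  simp only [mem_avoiding]
  refine ⟨fun h => ⟨fun k hk hkm => h k hk (by omega), h _ (by omega) le_rfl⟩,
    fun ⟨h, hlast⟩ k hk hkm => ?_⟩
  rcases Nat.lt_or_ge k (m + 1) with hlt | hge
  · exact h k hk (by omega)
  · rwa [show k = m + 1 by omega]

open Classical in
theorem killedFactor_succ (h : E → ℝ≥0∞) (n : ℕ) (ω : Ω) :
    killedFactor Z A h (n + 1) ω
      = if ω ∈ avoiding Z A n then (if Z (n + 1) ω ∈ A then 1 else h (Z (n + 1) ω)) else 1 := by
  by_cases hω : ω ∈ avoiding Z A n <;> by_cases hZ : Z (n + 1) ω ∈ A <;>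
    simp [killedFactor, mem_avoiding_succ, hω, hZ]

theorem one_le_killedFactor {w : E → ℝ≥0∞} (hw : ∀ y, 1 ≤ w y) (m : ℕ) (ω : Ω) :
    1 ≤ killedFactor Z A w m ω := by
  unfold killedFactor; split_ifs
  exacts [hw _, le_rfl]

theorem killedProd_zero (w : E → ℝ≥0∞) (ω : Ω) : killedProd Z A w 0 ω = 1 :=
  Finset.prod_range_zero _

theorem killedProd_succ (w : E → ℝ≥0∞) (n : ℕ) (ω : Ω) :
    killedProd Z A w (n + 1) ω = killedProd Z A w n ω * killedFactor Z A w n ω :=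
  Finset.prod_range_succ _ _

theorem killedProd_mul (w₁ w₂ : E → ℝ≥0∞) (N : ℕ) (ω : Ω) :
    killedProd Z A (w₁ * w₂) N ω = killedProd Z A w₁ N ω * killedProd Z A w₂ N ω := by
  rw [killedProd, killedProd, killedProd, ← Finset.prod_mul_distrib]
  refine Finset.prod_congr rfl fun m _ => ?_
  unfold killedFactor; split_ifs <;> simp

theorem monotone_killedProd {w : E → ℝ≥0∞} (hw : ∀ y, 1 ≤ w y) (ω : Ω) :
    Monotone fun N => killedProd Z A w N ω := fun _ _ hij =>
  Finset.prod_le_prod_of_subset_of_one_le' (Finset.range_subset_range.2 hij)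
    fun m _ _ => one_le_killedFactor hw m ω

theorem killedProd_const_of_le_firstHit (l : ℝ≥0∞) {n : ℕ} {ω : Ω}
    (hn : (n : ℕ∞) ≤ firstHit Z A ω) : killedProd Z A (fun _ => l) n ω = l ^ n := by
  have hfactor : ∀ m ∈ Finset.range n, killedFactor Z A (fun _ => l) m ω = l := by
    intro m hm
    refine if_pos (mem_avoiding.2 fun k hk hkm hkA => ?_)
    have : (n : ℕ∞) ≤ k := hn.trans (iInf₂_le k ⟨hk, hkA⟩)
    have := Finset.mem_range.1 hm
    norm_cast at *
    omega
  rw [killedProd, Finset.prod_congr rfl hfactor, Finset.prod_const, Finset.card_range]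

end Killed

section Past

variable [MeasurableSpace E] {Z : ℕ → Ω → E} {A : Set E}

abbrev past (Z : ℕ → Ω → E) (n : ℕ) : MeasurableSpace Ω :=
  MeasurableSpace.comap (path Z n) inferInstance

theorem measurable_past {k n : ℕ} (hk : k ≤ n) : Measurable[past Z n] (Z k) :=
  (measurable_pi_apply (⟨k, Nat.lt_succ_of_le hk⟩ : Fin (n + 1))).comp
    (comap_measurable (path Z n))

theorem measurableSet_avoiding (hA : MeasurableSet A) {m n : ℕ} (hmn : m ≤ n) :
    MeasurableSet[past Z n] (avoiding Z A m) :=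
  Finset.measurableSet_biInter _ fun _ hk =>
    measurable_past ((Finset.mem_Icc.1 hk).2.trans hmn) hA.compl

theorem measurable_killedFactor (hA : MeasurableSet A) {w : E → ℝ≥0∞} (hw : Measurable w)
    {m n : ℕ} (hmn : m ≤ n) : Measurable[past Z n] (killedFactor Z A w m) :=
  Measurable.ite (measurableSet_avoiding hA hmn) (hw.comp (measurable_past hmn)) measurable_const

theorem measurable_killedProd (hA : MeasurableSet A) {w : E → ℝ≥0∞} (hw : Measurable w)
    (n : ℕ) : Measurable[past Z n] (killedProd Z A w n) :=
  Finset.measurable_prod _ fun _ hm =>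
    measurable_killedFactor hA hw (Finset.mem_range.1 hm).le

variable [MeasurableSpace Ω]

theorem measurable_path (hZ : ∀ n, Measurable (Z n)) (n : ℕ) : Measurable (path Z n) :=
  measurable_pi_lambda _ fun i => hZ i

theorem past_le (hZ : ∀ n, Measurable (Z n)) (n : ℕ) : past Z n ≤ ‹MeasurableSpace Ω› :=
  (measurable_path hZ n).comap_le

end Past

def IsMarkovChain [MeasurableSpace E] [MeasurableSpace Ω] (Q : Kernel E E) (μ : Measure Ω)
    (Z : ℕ → Ω → E) : Prop :=
  ∀ (n : ℕ) (B : Set E), MeasurableSet B →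
    μ[fun ω => B.indicator (fun _ => (1 : ℝ)) (Z (n + 1) ω) | past Z n]
      =ᵐ[μ] fun ω => (Q (Z n ω) B).toReal

section Supersolutions

variable [MeasurableSpace E] {Q : Kernel E E} [IsMarkovKernel Q] {A : Set E}

theorem lintegral_ofReal_rpow_le {V : E → ℝ} (hVm : Measurable V) (hV0 : ∀ y, 0 ≤ V y)
    (hVint : ∀ y, Integrable V (Q y)) {lam K : ℝ}
    (hdrift : ∀ y, ∫ z, V z ∂(Q y) ≤ lam * V y + K) {α : ℝ} (hα0 : 0 ≤ α) (hα1 : α ≤ 1)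
    (y : E) : ∫⁻ z, ENNReal.ofReal (V z) ^ α ∂(Q y) ≤ ENNReal.ofReal (lam * V y + K) ^ α :=
  calc ∫⁻ z, ENNReal.ofReal (V z) ^ α ∂(Q y)
      ≤ (∫⁻ z, ENNReal.ofReal (V z) ∂(Q y)) ^ α :=
        lintegral_rpow_le_rpow_lintegral hVm.ennreal_ofReal.aemeasurable hα0 hα1
    _ ≤ ENNReal.ofReal (lam * V y + K) ^ α := by
        rw [← ofReal_integral_eq_lintegral_ofReal (hVint y) (ae_of_all _ hV0)]
        gcongr
        exact hdrift y

open Classical in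
theorem drift_supersolution {V : E → ℝ} (hVm : Measurable V) (hV1 : ∀ y, 1 ≤ V y)
    (hVint : ∀ y, Integrable V (Q y)) {lam K M : ℝ} (hlam : 0 ≤ lam) (hK : 0 ≤ K) (hM : 0 < M)
    (hdrift : ∀ y, ∫ z, V z ∂(Q y) ≤ lam * V y + K) {α a b : ℝ} (hα0 : 0 ≤ α) (hα1 : α ≤ 1)
    (ha : 0 ≤ a) (hb : 0 ≤ b) (hon : a * (lam * M + K) ^ α ≤ 1)
    (hoff : b * (lam + K / M) ^ α ≤ 1) (y : E) :
    ENNReal.ofReal (if V y ≤ M then a else b)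
        * ∫⁻ z, (if z ∈ A then 1 else ENNReal.ofReal (V z) ^ α) ∂(Q y)
      ≤ ENNReal.ofReal (V y) ^ α := by
  have hV0 y : 0 ≤ V y := zero_le_one.trans (hV1 y)
  have hpw z : (if z ∈ A then 1 else ENNReal.ofReal (V z) ^ α) ≤ ENNReal.ofReal (V z) ^ α := by
    split_ifs
    · rw [ENNReal.ofReal_rpow_of_nonneg (hV0 z) hα0]
      exact ENNReal.one_le_ofReal.2 (Real.one_le_rpow (hV1 z) hα0)
    · exact le_rfl
  calc ENNReal.ofReal (if V y ≤ M then a else b)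
        * ∫⁻ z, (if z ∈ A then 1 else ENNReal.ofReal (V z) ^ α) ∂(Q y)
      ≤ ENNReal.ofReal (if V y ≤ M then a else b) * ENNReal.ofReal (lam * V y + K) ^ α := by
        gcongr
        exact (lintegral_mono hpw).trans
          (lintegral_ofReal_rpow_le hVm hV0 hVint hdrift hα0 hα1 y)
    _ = ENNReal.ofReal ((if V y ≤ M then a else b) * (lam * V y + K) ^ α) := by
        rw [ENNReal.ofReal_rpow_of_nonneg (add_nonneg (mul_nonneg hlam (hV0 y)) hK) hα0,
          ENNReal.ofReal_mul (by split_ifs <;> assumption)]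
    _ ≤ ENNReal.ofReal (V y) ^ α := by
        rw [ENNReal.ofReal_rpow_of_nonneg (hV0 y) hα0]
        exact ENNReal.ofReal_le_ofReal
          (ite_mul_rpow_le_rpow hlam hK hM (hV1 y) hα0 ha hb hon hoff)

open Classical in
theorem minorization_supersolution (hA : MeasurableSet A) {S : Set E} {ε β c : ℝ}
    (hS : ∀ y ∈ S, ε ≤ (Q y A).toReal) (hβ : 0 ≤ β) (hc1 : 1 ≤ c)
    (hc : β * (ε + c * (1 - ε)) ≤ c) (y : E) :
    ENNReal.ofReal (if y ∈ S then β else 1)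
        * ∫⁻ z, (if z ∈ A then 1 else ENNReal.ofReal c) ∂(Q y)
      ≤ ENNReal.ofReal c := by
  have hint : ∫⁻ z, (if z ∈ A then 1 else ENNReal.ofReal c) ∂(Q y)
      = ENNReal.ofReal ((Q y A).toReal + c * (1 - (Q y A).toReal)) := by
    have ht1 : (Q y A).toReal ≤ 1 := ENNReal.toReal_le_of_le_ofReal zero_le_one
      (prob_le_one.trans_eq ENNReal.ofReal_one.symm)
    change ∫⁻ z, A.piecewise (fun _ => 1) (fun _ => ENNReal.ofReal c) z ∂(Q y) = _
    rw [lintegral_piecewise hA, setLIntegral_const, setLIntegral_const, one_mul,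
      prob_compl_eq_one_sub hA, ENNReal.ofReal_add ENNReal.toReal_nonneg (by nlinarith),
      ENNReal.ofReal_toReal (measure_ne_top _ _), ENNReal.ofReal_mul (by linarith),
      ENNReal.ofReal_sub _ ENNReal.toReal_nonneg, ENNReal.ofReal_one,
      ENNReal.ofReal_toReal (measure_ne_top _ _)]
  rw [hint, ← ENNReal.ofReal_mul (by split_ifs <;> linarith)]
  exact ENNReal.ofReal_le_ofReal
    (ite_mul_add_mul_sub_le (hS y) ENNReal.toReal_nonneg hβ hc1 hc)

end Supersolutions

section Integrals

variable [MeasurableSpace E] [MeasurableSpace Ω] {μ : Measure Ω} {Z : ℕ → Ω → E} {A : Set E}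

theorem lintegral_iSup_pow_le (hZ : ∀ n, Measurable (Z n)) (hA : MeasurableSet A)
    {l : ℝ≥0∞} (hl : 1 ≤ l) :
    ∫⁻ ω, ⨆ n : ℕ, (if (n : ℕ∞) ≤ firstHit Z A ω then l ^ n else 0) ∂μ
      ≤ ⨆ N, ∫⁻ ω, killedProd Z A (fun _ => l) N ω ∂μ := by
  have hpoint ω : ⨆ n : ℕ, (if (n : ℕ∞) ≤ firstHit Z A ω then l ^ n else 0)
      ≤ ⨆ N, killedProd Z A (fun _ => l) N ω := by
    refine iSup_mono fun n => ?_
    split_ifs with hn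
    · exact (killedProd_const_of_le_firstHit l hn).ge
    · exact zero_le
  refine (lintegral_mono hpoint).trans_eq (lintegral_iSup (fun N => ?_)
    fun _ _ hij ω => monotone_killedProd (fun _ => hl) ω hij)
  exact (measurable_killedProd hA measurable_const N).mono (past_le hZ N) le_rfl

theorem lintegral_killedProd_le_sqrt_mul_sqrt (hZ : ∀ n, Measurable (Z n))
    (hA : MeasurableSet A) {w w₁ w₂ : E → ℝ≥0∞} (hw₁ : Measurable w₁) (hw₂ : Measurable w₂)
    (hw : ∀ y, w₁ y * w₂ y = w y ^ 2) (N : ℕ) :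
    ∫⁻ ω, killedProd Z A w N ω ∂μ
      ≤ (∫⁻ ω, killedProd Z A w₁ N ω ∂μ) ^ (1 / 2 : ℝ)
        * (∫⁻ ω, killedProd Z A w₂ N ω ∂μ) ^ (1 / 2 : ℝ) := by
  have hsq ω : killedProd Z A w N ω
      = killedProd Z A w₁ N ω ^ (1 / 2 : ℝ) * killedProd Z A w₂ N ω ^ (1 / 2 : ℝ) := by
    rw [← ENNReal.mul_rpow_of_nonneg _ _ (by norm_num), ← killedProd_mul,
      show w₁ * w₂ = w * w from funext fun y => (hw y).trans (sq _), killedProd_mul, ← sq,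
      ← ENNReal.rpow_natCast, ← ENNReal.rpow_mul]
    norm_num
  have hmeas (v : E → ℝ≥0∞) (hv : Measurable v) : AEMeasurable (killedProd Z A v N) μ :=
    ((measurable_killedProd hA hv N).mono (past_le hZ N) le_rfl).aemeasurable
  rw [lintegral_congr hsq]
  exact ENNReal.lintegral_mul_norm_pow_le (hmeas _ hw₁) (hmeas _ hw₂) (by norm_num) (by norm_num)
    (by norm_num)

end Integrals

namespace IsMarkovChain

variable [MeasurableSpace E] [MeasurableSpace Ω] {Q : Kernel E E} {μ : Measure Ω}
  {Z : ℕ → Ω → E} [IsProbabilityMeasure μ] [IsMarkovKernel Q]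

theorem setLIntegral_kernel_eq_measure_inter (hchain : IsMarkovChain Q μ Z)
    (hZ : ∀ n, Measurable (Z n)) (n : ℕ) {s : Set Ω} (hs : MeasurableSet[past Z n] s)
    {B : Set E} (hB : MeasurableSet B) :
    ∫⁻ ω in s, Q (Z n ω) B ∂μ = μ (s ∩ Z (n + 1) ⁻¹' B) := by
  have hB' : MeasurableSet (Z (n + 1) ⁻¹' B) := hZ (n + 1) hB
  have hind : (fun ω => B.indicator (fun _ => (1 : ℝ)) (Z (n + 1) ω))
      = (Z (n + 1) ⁻¹' B).indicator 1 := by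
    ext ω; exact (indicator_comp_right (Z (n + 1))).symm
  have hreal : ∫ ω in s, (Q (Z n ω) B).toReal ∂μ = μ.real (s ∩ Z (n + 1) ⁻¹' B) := by
    rw [← setIntegral_congr_ae (past_le hZ n s hs) ((hchain n B hB).mono fun ω h _ => h),
      setIntegral_condExp (past_le hZ n) _ hs, hind, integral_indicator_one hB',
      measureReal_restrict_apply hB', inter_comm]
    exact (integrable_const 1).indicator hB'
  have hmeas : Measurable fun ω => Q (Z n ω) B := (Q.measurable_coe hB).comp (hZ n)
  rw [integral_toReal hmeas.aemeasurable (ae_of_all _ fun ω => measure_lt_top _ _),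
    measureReal_def] at hreal
  refine (ENNReal.toReal_eq_toReal_iff' (ne_top_of_le_ne_top (measure_ne_top μ s) ?_)
    (measure_ne_top _ _)).1 hreal
  exact (lintegral_mono fun ω => prob_le_one).trans_eq (setLIntegral_one s)

theorem map_eq_compProd (hchain : IsMarkovChain Q μ Z) (hZ : ∀ n, Measurable (Z n)) (n : ℕ) :
    μ.map (fun ω => (path Z n ω, Z (n + 1) ω))
      = μ.map (path Z n) ⊗ₘ Q.comap (fun p => p (Fin.last n)) (measurable_pi_apply _) := by
  refine Measure.ext_prod fun {s t} hs ht => ?_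
  rw [Measure.map_apply ((measurable_path hZ n).prodMk (hZ (n + 1))) (hs.prod ht),
    Measure.compProd_apply_prod hs ht, setLIntegral_map hs (Kernel.measurable_coe _ ht)
      (measurable_path hZ n), mk_preimage_prod]
  exact (hchain.setLIntegral_kernel_eq_measure_inter hZ n ⟨s, hs, rfl⟩ ht).symm

theorem lintegral_mul_comp_succ (hchain : IsMarkovChain Q μ Z) (hZ : ∀ n, Measurable (Z n))
    (n : ℕ) {Y : Ω → ℝ≥0∞} (hY : Measurable[past Z n] Y) {φ : E → ℝ≥0∞} (hφ : Measurable φ) :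
    ∫⁻ ω, Y ω * φ (Z (n + 1) ω) ∂μ = ∫⁻ ω, Y ω * ∫⁻ y, φ y ∂(Q (Z n ω)) ∂μ := by
  obtain ⟨g, hg, rfl⟩ := hY.exists_eq_measurable_comp
  calc ∫⁻ ω, g (path Z n ω) * φ (Z (n + 1) ω) ∂μ
      = ∫⁻ p, g p.1 * φ p.2 ∂(μ.map fun ω => (path Z n ω, Z (n + 1) ω)) :=
        (lintegral_map ((hg.comp measurable_fst).mul (hφ.comp measurable_snd))
          ((measurable_path hZ n).prodMk (hZ (n + 1)))).symm
    _ = ∫⁻ p, g p * ∫⁻ y, φ y ∂(Q (p (Fin.last n))) ∂(μ.map (path Z n)) := by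
        rw [hchain.map_eq_compProd hZ n,
          Measure.lintegral_compProd (f := fun p => g p.1 * φ p.2)
            ((hg.comp measurable_fst).mul (hφ.comp measurable_snd))]
        simp_rw [Kernel.comap_apply, lintegral_const_mul _ hφ]
    _ = ∫⁻ ω, g (path Z n ω) * ∫⁻ y, φ y ∂(Q (Z n ω)) ∂μ :=
        lintegral_map (hg.mul ((hφ.lintegral_kernel).comp (measurable_pi_apply _)))
          (measurable_path hZ n)

open Classical in
theorem lintegral_killedProd_mul_killedFactor_succ_le (hchain : IsMarkovChain Q μ Z)
    (hZ : ∀ n, Measurable (Z n)) {A : Set E} (hA : MeasurableSet A) {w h : E → ℝ≥0∞}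
    (hw : Measurable w) (hh : Measurable h)
    (hsup : ∀ y, w y * ∫⁻ z, (if z ∈ A then 1 else h z) ∂(Q y) ≤ h y) (n : ℕ) :
    ∫⁻ ω, killedProd Z A w (n + 1) ω * killedFactor Z A h (n + 1) ω ∂μ
      ≤ ∫⁻ ω, killedProd Z A w n ω * killedFactor Z A h n ω ∂μ := by
  set ψ : E → ℝ≥0∞ := fun z => if z ∈ A then 1 else h z
  set S := avoiding Z A n
  set Y := S.indicator fun ω => killedProd Z A w n ω * w (Z n ω)
  set R := Sᶜ.indicator (killedProd Z A w n)
  have hY : Measurable[past Z n] Y :=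
    ((measurable_killedProd hA hw n).mul (hw.comp (measurable_past le_rfl))).indicator
      (measurableSet_avoiding hA le_rfl)
  have hYm : Measurable Y := hY.mono (past_le hZ n) le_rfl
  have hψ : Measurable ψ := Measurable.ite hA measurable_const hh
  have hsplit : ∀ ω, killedProd Z A w (n + 1) ω * killedFactor Z A h (n + 1) ω
      = Y ω * ψ (Z (n + 1) ω) + R ω := by
    intro ω
    rw [killedProd_succ, killedFactor_succ]
    by_cases hω : ω ∈ S <;> simp [Y, R, ψ, S, killedFactor, hω, mul_assoc]
  have hbound : ∀ ω, Y ω * ∫⁻ y, ψ y ∂(Q (Z n ω)) + R ω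
      ≤ killedProd Z A w n ω * killedFactor Z A h n ω := by
    intro ω
    by_cases hω : ω ∈ S
    · simp only [Y, R, killedFactor, indicator_of_mem hω,
        indicator_of_notMem (notMem_compl_iff.2 hω), add_zero, mul_assoc]
      rw [if_pos hω]
      gcongr
      exact hsup _
    · simp [Y, R, S, killedFactor, hω]
  calc _ = ∫⁻ ω, Y ω * ψ (Z (n + 1) ω) ∂μ + ∫⁻ ω, R ω ∂μ := by
        rw [lintegral_congr hsplit,
          lintegral_add_left (f := fun ω => Y ω * ψ (Z (n + 1) ω)) (hYm.mul (hψ.comp (hZ _)))]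
    _ = ∫⁻ ω, Y ω * ∫⁻ y, ψ y ∂(Q (Z n ω)) ∂μ + ∫⁻ ω, R ω ∂μ := by
        rw [hchain.lintegral_mul_comp_succ hZ n hY hψ]
    _ ≤ _ := by
        rw [← lintegral_add_left (f := fun ω => Y ω * ∫⁻ y, ψ y ∂(Q (Z n ω)))
          (hYm.mul (hψ.lintegral_kernel.comp (hZ n)))]
        exact lintegral_mono hbound

open Classical in
theorem lintegral_killedProd_le (hchain : IsMarkovChain Q μ Z) (hZ : ∀ n, Measurable (Z n))
    {A : Set E} (hA : MeasurableSet A) {w h : E → ℝ≥0∞} (hw : Measurable w) (hh : Measurable h)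
    (hh1 : ∀ y, 1 ≤ h y) (hsup : ∀ y, w y * ∫⁻ z, (if z ∈ A then 1 else h z) ∂(Q y) ≤ h y)
    {x : E} (hZ0 : ∀ ω, Z 0 ω = x) (N : ℕ) :
    ∫⁻ ω, killedProd Z A w N ω ∂μ ≤ h x := by
  have hanti : Antitone fun n => ∫⁻ ω, killedProd Z A w n ω * killedFactor Z A h n ω ∂μ :=
    antitone_nat_of_succ_le (hchain.lintegral_killedProd_mul_killedFactor_succ_le hZ hA hw hh hsup)
  calc ∫⁻ ω, killedProd Z A w N ω ∂μ
      ≤ ∫⁻ ω, killedProd Z A w N ω * killedFactor Z A h N ω ∂μ :=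
        lintegral_mono fun ω => le_mul_of_one_le_right' (one_le_killedFactor hh1 N ω)
    _ ≤ ∫⁻ ω, killedProd Z A w 0 ω * killedFactor Z A h 0 ω ∂μ := hanti (Nat.zero_le N)
    _ = h x := by simp [killedProd_zero, killedFactor, avoiding, hZ0]

open Classical in
theorem lintegral_killedProd_const_le (hchain : IsMarkovChain Q μ Z)
    (hZ : ∀ n, Measurable (Z n)) {x : E} (hZ0 : ∀ ω, Z 0 ω = x) {V : E → ℝ}
    (hVm : Measurable V) (hV1 : ∀ y, 1 ≤ V y) (hVint : ∀ y, Integrable V (Q y)) {lam K M : ℝ}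
    (hlam : 0 ≤ lam) (hK : 0 ≤ K) (hM : 0 < M) (hdrift : ∀ y, ∫ z, V z ∂(Q y) ≤ lam * V y + K)
    {A : Set E} (hA : MeasurableSet A) {ε : ℝ} (hminor : ∀ y, V y ≤ M → ε ≤ (Q y A).toReal)
    {α l β c : ℝ} (hα0 : 0 < α) (hα1 : α ≤ 1) (hl : 0 ≤ l) (hoff : l ^ 2 * (lam + K / M) ^ α ≤ 1)
    (hβ0 : 0 < β) (hβ : l ^ 2 * (lam * M + K) ^ α ≤ β) (hc1 : 1 ≤ c)
    (hc : β * (ε + c * (1 - ε)) ≤ c) (N : ℕ) :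
    ∫⁻ ω, killedProd Z A (fun _ => ENNReal.ofReal l) N ω ∂μ ≤ ENNReal.ofReal (√c * V x) := by
  set S := {y | V y ≤ M}
  have hS : MeasurableSet S := measurableSet_le hVm measurable_const
  set w₁ : E → ℝ≥0∞ := fun y => ENNReal.ofReal (if V y ≤ M then l ^ 2 / β else l ^ 2)
  set w₂ : E → ℝ≥0∞ := fun y => ENNReal.ofReal (if y ∈ S then β else 1)
  have hw₁ : Measurable w₁ := (Measurable.ite hS measurable_const measurable_const).ennreal_ofReal
  have hw₂ : Measurable w₂ := (Measurable.ite hS measurable_const measurable_const).ennreal_ofReal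
  have hw y : w₁ y * w₂ y = ENNReal.ofReal l ^ 2 := by
    simp only [w₁, w₂, S, mem_ofPred_eq]
    rw [← ENNReal.ofReal_mul (by split_ifs <;> positivity), ← ENNReal.ofReal_pow hl]
    split_ifs <;> field_simp
  have h₁ : ∫⁻ ω, killedProd Z A w₁ N ω ∂μ ≤ ENNReal.ofReal (V x) ^ α :=
    hchain.lintegral_killedProd_le hZ hA hw₁ (by fun_prop)
      (fun y => ENNReal.one_le_rpow (ENNReal.one_le_ofReal.2 (hV1 y)) hα0)
      (drift_supersolution hVm hV1 hVint hlam hK hM hdrift hα0.le hα1 (by positivity)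
        (by positivity) (by rwa [div_mul_eq_mul_div, div_le_one hβ0]) hoff) hZ0 N
  have h₂ : ∫⁻ ω, killedProd Z A w₂ N ω ∂μ ≤ ENNReal.ofReal c :=
    hchain.lintegral_killedProd_le hZ hA hw₂ measurable_const
      (fun _ => ENNReal.one_le_ofReal.2 hc1)
      (minorization_supersolution hA hminor hβ0.le hc1 hc) hZ0 N
  calc _ ≤ _ := lintegral_killedProd_le_sqrt_mul_sqrt hZ hA hw₁ hw₂ hw N
    _ ≤ (ENNReal.ofReal (V x) ^ α) ^ (1 / 2 : ℝ) * ENNReal.ofReal c ^ (1 / 2 : ℝ) := by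
        gcongr
    _ ≤ ENNReal.ofReal (V x) * ENNReal.ofReal √c := by
        rw [← ENNReal.rpow_mul, Real.sqrt_eq_rpow,
          ← ENNReal.ofReal_rpow_of_nonneg (by linarith) (by norm_num)]
        gcongr
        calc _ ≤ ENNReal.ofReal (V x) ^ (1 : ℝ) :=
              ENNReal.rpow_le_rpow_of_exponent_le (ENNReal.one_le_ofReal.2 (hV1 x)) (by linarith)
          _ = _ := ENNReal.rpow_one _
    _ = ENNReal.ofReal (√c * V x) := by rw [mul_comm, ENNReal.ofReal_mul (Real.sqrt_nonneg c)]

end IsMarkovChain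

end MarkovChainDrift

open MarkovChainDrift in
theorem stmt_9 {E : Type*} [MeasurableSpace E]
    (lam K M r ε l : ℝ)
    (hlam : lam ∈ Set.Ioo (0 : ℝ) 1) (hK : 0 < K)
    (hM : max (K / (1 - lam)) 1 < M) (hr : r = (lam + K / M)⁻¹)
    (hε : 0 < ε)
    (hl1 : 1 < l)
    (hl2 : l < r ^ ((|Real.log (1 - ε)| ⊓ Real.log M) / (2 * Real.log M))) :
    ∃ C : ℝ, 0 < C ∧
      ∀ (Q : Kernel E E), IsMarkovKernel Q →
      ∀ (V : E → ℝ), Measurable V → (∀ x, 1 ≤ V x) → (∀ x, Integrable V (Q x)) →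
      (∀ x, ∫ y, V y ∂(Q x) ≤ lam * V x + K) →
      ∀ (A : Set E), MeasurableSet A →
      (∀ x, V x ≤ M → ε ≤ (Q x A).toReal) →
      ∀ (Ω : Type) (_ : MeasurableSpace Ω) (μ : Measure Ω), IsProbabilityMeasure μ →
      ∀ (Z : ℕ → Ω → E), (∀ n, Measurable (Z n)) →
      (∀ (n : ℕ) (B : Set E), MeasurableSet B →
        (μ[fun ω => Set.indicator B (fun _ => (1 : ℝ)) (Z (n + 1) ω) |
            MeasurableSpace.comap (fun ω (i : Fin (n + 1)) => Z i ω) inferInstance])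
          =ᵐ[μ] fun ω => (Q (Z n ω) B).toReal) →
      ∀ x : E, (∀ ω, Z 0 ω = x) →
      -- `E_x[l ^ τ_A] ≤ C ⬝ V(x)` where `τ_A = inf {n ≥ 1 : Z n ∈ A}`; the supremum below
      -- equals `l ^ τ_A` (with value `∞` if the chain never hits `A`, since `l > 1`)
      ∫⁻ ω, ⨆ n : ℕ,
          (if (n : ℕ∞) ≤ ⨅ (m : ℕ) (_ : 1 ≤ m ∧ Z m ω ∈ A), (m : ℕ∞)
            then ENNReal.ofReal l ^ n else 0) ∂μ
        ≤ ENNReal.ofReal (C * V x) := by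
  subst hr
  have hM1 : 1 < M := (le_max_right _ _).trans_lt hM
  obtain ⟨α, hα0, hα1, hoff, hon⟩ := exists_exponent hlam.1 hK.le hM1 hε hl1 hl2
  have hβ0 : 0 < l ^ 2 * (lam * M + K) ^ α :=
    mul_pos (by positivity) (Real.rpow_pos_of_pos (by nlinarith [hlam.1]) α)
  obtain ⟨c, hc1, hc⟩ := exists_minorization_constant hon
  refine ⟨√c, Real.sqrt_pos.2 (by linarith), ?_⟩
  intro Q _ V hVm hV1 hVint hdrift A hA hminor Ω _ μ _ Z hZ hchain x hZ0
  refine (lintegral_iSup_pow_le hZ hA (ENNReal.one_le_ofReal.2 hl1.le)).trans (iSup_le fun N => ?_)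
  exact IsMarkovChain.lintegral_killedProd_const_le hchain hZ hZ0 hVm hV1 hVint hlam.1.le hK.le
    (by linarith) hdrift hA hminor hα0 hα1 (by linarith) hoff
    hβ0 le_rfl hc1 hc N
end
end

section
/- Let E be a Polish space with partial order ⪯ with closed graph, and let (X_n)_{n≥0}, (Y_n)_{n≥0} be two independent Markov chains on E with order-preserving transition kernel P, started at x and y respectively. Define τ := inf{n ≥ 0 : X_n ⪯ Y_n}, and for t ≥ τ (with t a fixed positive integer) define η^x := X_t on {τ ≤ t} and η^x := æ on {τ > t}, η^y := Y_t on {τ ≤ t} and η^y := æ on {τ > t}, where æ is an extra point added to E with æ ⪯ æ and no other order relations. Then Law(η^x) is stochastically dominated by Law(η^y) in the extended ordered space E ∪ {æ}. -/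
open MeasureTheory ProbabilityTheory
open scoped Classical

/-- The order on `E ∪ {æ}` (modelled as `Option E`, with `æ = none`): the extra point `æ`
is comparable only to itself, and on `E` the order is the original one. -/
def extLE {E : Type*} [LE E] : Option E → Option E → Prop
  | some a, some b => a ≤ b
  | none, none => True
  | _, _ => False

instance {E : Type*} [m : MeasurableSpace E] : MeasurableSpace (Option E) := m.map some

/-!
Split `{τ ≤ t}` according to the value `i` of `τ`. The event `{τ = i}` is determined by
`(X j, Y j)_{j ≤ i}`, so by the Markov property of the pair, on it `g (X t)` and `g (Y t)` may be
replaced by `(P^{t-i} g) (X i)` and `(P^{t-i} g) (Y i)`. For increasing `g` the function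
`P^{t-i} g` is increasing, and `X i ≤ Y i` on `{τ = i}`. On `{τ > t}` both variables equal `æ`.
-/

section KernelOp

variable {α β : Type*} [MeasurableSpace α] [MeasurableSpace β]

noncomputable def kernelOp (P : Kernel α β) (g : β → ℝ) : α → ℝ := fun z => ∫ w, g w ∂(P z)

theorem measurable_kernelOp (P : Kernel α β) {g : β → ℝ} (hg : Measurable g) :
    Measurable (kernelOp P g) :=
  (hg.stronglyMeasurable.integral_kernel (κ := P)).measurable

theorem abs_kernelOp_le (P : Kernel α β) [IsMarkovKernel P] {g : β → ℝ} {C : ℝ}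
    (hg : ∀ w, |g w| ≤ C) (z : α) : |kernelOp P g z| ≤ C := by
  simpa [kernelOp] using norm_integral_le_of_norm_le_const (μ := P z)
    (Filter.Eventually.of_forall fun w => (Real.norm_eq_abs (g w)).trans_le (hg w))

theorem kernelOp_const (P : Kernel α β) [IsMarkovKernel P] (c : ℝ) :
    kernelOp P (fun _ => c) = fun _ => c := by
  ext z
  simp [kernelOp]

end KernelOp

section KernelOpIterate

variable {α : Type*} [MeasurableSpace α] (P : Kernel α α)

theorem measurable_kernelOp_iterate {g : α → ℝ} (hg : Measurable g) (k : ℕ) :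
    Measurable ((kernelOp P)^[k] g) := by
  induction k with
  | zero => exact hg
  | succ k ih => rw [Function.iterate_succ_apply']; exact measurable_kernelOp P ih

theorem abs_kernelOp_iterate_le [IsMarkovKernel P] {g : α → ℝ} {C : ℝ}
    (hg : ∀ w, |g w| ≤ C) (k : ℕ) (z : α) : |(kernelOp P)^[k] g z| ≤ C := by
  induction k generalizing z with
  | zero => exact hg z
  | succ k ih => rw [Function.iterate_succ_apply']; exact abs_kernelOp_le P ih z

theorem kernelOp_iterate_const [IsMarkovKernel P] (c : ℝ) (k : ℕ) :
    (kernelOp P)^[k] (fun _ => c) = fun _ => c :=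
  Function.iterate_fixed (kernelOp_const P c) k

end KernelOpIterate

def IsOrderPreserving {α : Type*} [MeasurableSpace α] [Preorder α] (P : Kernel α α) : Prop :=
  ∀ x y : α, x ≤ y → ∀ f : α → ℝ, Measurable f →
    (∃ C : ℝ, ∀ z, |f z| ≤ C) → Monotone f → ∫ z, f z ∂(P x) ≤ ∫ z, f z ∂(P y)

theorem IsOrderPreserving.monotone_kernelOp_iterate {α : Type*} [MeasurableSpace α] [Preorder α]
    {P : Kernel α α} [IsMarkovKernel P] (hP : IsOrderPreserving P) {g : α → ℝ}
    (hg : Measurable g) {C : ℝ} (hgC : ∀ w, |g w| ≤ C) (hmono : Monotone g) (k : ℕ) :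
    Monotone ((kernelOp P)^[k] g) := by
  induction k with
  | zero => exact hmono
  | succ k ih =>
    rw [Function.iterate_succ_apply']
    exact fun x y hxy => hP x y hxy _ (measurable_kernelOp_iterate P hg k)
      ⟨C, abs_kernelOp_iterate_le P hgC k⟩ ih

section ProductLaw

variable {Ω α β γ δ : Type*} [MeasurableSpace Ω] [MeasurableSpace α] [MeasurableSpace β]
  [MeasurableSpace γ] [MeasurableSpace δ] {ν : Measure Ω} [IsFiniteMeasure ν]
  {P : Kernel α γ} {Q : Kernel β δ} [IsMarkovKernel P] [IsMarkovKernel Q]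
  {U : Ω → α} {V : Ω → β} {U' : Ω → γ} {V' : Ω → δ}

theorem map_prodMk_eq_comp_of_forall_rect (hU : Measurable U) (hV : Measurable V)
    (hU' : Measurable U') (hV' : Measurable V')
    (hrect : ∀ A B, MeasurableSet A → MeasurableSet B →
      ν (U' ⁻¹' A ∩ V' ⁻¹' B) = ∫⁻ ω, P (U ω) A * Q (V ω) B ∂ν) :
    ν.map (fun ω => (U' ω, V' ω)) = (P.comap U hU ×ₖ Q.comap V hV) ∘ₘ ν := by
  have hpair : Measurable fun ω => (U' ω, V' ω) := hU'.prodMk hV'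
  refine ext_of_generate_finite _ generateFrom_prod.symm isPiSystem_prod ?_ ?_
  · rintro _ ⟨A, hA, B, hB, rfl⟩
    rw [Measure.map_apply hpair (hA.prod hB), Set.mk_preimage_prod, hrect A B hA hB,
      Measure.bind_apply (hA.prod hB) (Kernel.aemeasurable _)]
    simp [Kernel.prod_apply, Measure.prod_prod]
  · rw [Measure.map_apply hpair .univ, Measure.bind_apply .univ (Kernel.aemeasurable _)]
    simp

theorem integral_mul_eq_of_forall_rect (hU : Measurable U) (hV : Measurable V)
    (hU' : Measurable U') (hV' : Measurable V')
    (hrect : ∀ A B, MeasurableSet A → MeasurableSet B →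
      ν (U' ⁻¹' A ∩ V' ⁻¹' B) = ∫⁻ ω, P (U ω) A * Q (V ω) B ∂ν)
    {g : γ → ℝ} {h : δ → ℝ} (hg : Measurable g) (hh : Measurable h) {Cg Ch : ℝ}
    (hgC : ∀ z, |g z| ≤ Cg) (hhC : ∀ z, |h z| ≤ Ch) :
    ∫ ω, g (U' ω) * h (V' ω) ∂ν = ∫ ω, (∫ z, g z ∂P (U ω)) * (∫ z, h z ∂Q (V ω)) ∂ν := by
  set κ := P.comap U hU ×ₖ Q.comap V hV
  have hF : Measurable fun p : γ × δ => g p.1 * h p.2 :=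
    (hg.comp measurable_fst).mul (hh.comp measurable_snd)
  have hFint : Integrable (fun q : Ω × (γ × δ) => g q.2.1 * h q.2.2) (ν ⊗ₘ κ) := by
    refine .of_bound (hF.comp measurable_snd).aestronglyMeasurable (Cg * Ch)
      (Filter.Eventually.of_forall fun q => ?_)
    rw [Real.norm_eq_abs, abs_mul]
    exact mul_le_mul (hgC _) (hhC _) (abs_nonneg _) ((abs_nonneg _).trans (hgC q.2.1))
  calc ∫ ω, g (U' ω) * h (V' ω) ∂ν
      = ∫ p, g p.1 * h p.2 ∂(ν.map fun ω => (U' ω, V' ω)) :=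
        (integral_map (hU'.prodMk hV').aemeasurable hF.aestronglyMeasurable).symm
    _ = ∫ q, g q.2.1 * h q.2.2 ∂(ν ⊗ₘ κ) := by
        rw [map_prodMk_eq_comp_of_forall_rect hU hV hU' hV' hrect, ← Measure.snd_compProd,
          Measure.snd, integral_map measurable_snd.aemeasurable hF.aestronglyMeasurable]
    _ = ∫ ω, (∫ z, g z ∂P (U ω)) * (∫ z, h z ∂Q (V ω)) ∂ν := by
        rw [Measure.integral_compProd hFint]
        refine integral_congr_ae (Filter.Eventually.of_forall fun ω => ?_)
        simp only [κ, Kernel.prod_apply, Kernel.comap_apply]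
        exact integral_prod_mul g h

end ProductLaw

theorem integral_le_integral_of_setIntegral_le {Ω ι : Type*} [MeasurableSpace Ω] {μ : Measure Ω}
    {s : Finset ι} {D : ι → Set Ω} (hD : ∀ i ∈ s, MeasurableSet (D i))
    (hdisj : (s : Set ι).PairwiseDisjoint D) {F G : Ω → ℝ} (hF : Integrable F μ)
    (hG : Integrable G μ) (heq : ∀ ω ∉ ⋃ i ∈ s, D i, F ω = G ω)
    (hle : ∀ i ∈ s, ∫ ω in D i, F ω ∂μ ≤ ∫ ω in D i, G ω ∂μ) :
    ∫ ω, F ω ∂μ ≤ ∫ ω, G ω ∂μ := by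
  have hU : MeasurableSet (⋃ i ∈ s, D i) := Finset.measurableSet_biUnion s hD
  have hsplit : ∀ H : Ω → ℝ, Integrable H μ →
      ∫ ω, H ω ∂μ = ∑ i ∈ s, ∫ ω in D i, H ω ∂μ + ∫ ω in (⋃ i ∈ s, D i)ᶜ, H ω ∂μ :=
    fun H hH => by
      rw [← integral_add_compl hU hH,
        integral_biUnion_finset s hD hdisj fun i _ => hH.integrableOn]
  rw [hsplit F hF, hsplit G hG, setIntegral_congr_fun hU.compl heq]
  exact add_le_add_left (Finset.sum_le_sum hle) _

theorem setOf_exists_le_eq_biUnion_disjointed {Ω : Type*} (p : ℕ → Ω → Prop) (t : ℕ) :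
    {ω | ∃ n ≤ t, p n ω} = ⋃ i ∈ Finset.range (t + 1), disjointed (fun n => {ω | p n ω}) i := by
  rw [biUnion_range_succ_disjointed, partialSups_eq_biSup]
  ext ω
  simp

section MarkovPair

variable {Ω E : Type*} [MeasurableSpace E]

abbrev pastPairs (X Y : ℕ → Ω → E) (n : ℕ) : MeasurableSpace Ω :=
  MeasurableSpace.comap (fun ω (i : Fin (n + 1)) => (X i ω, Y i ω)) inferInstance

theorem measurableSet_pastPairs_preimage (X Y : ℕ → Ω → E) {j n : ℕ} (hjn : j ≤ n)
    {s : Set (E × E)} (hs : MeasurableSet s) :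
    MeasurableSet[pastPairs X Y n] ((fun ω => (X j ω, Y j ω)) ⁻¹' s) :=
  ⟨(fun v => v ⟨j, Nat.lt_succ_of_le hjn⟩) ⁻¹' s, measurable_pi_apply _ hs, rfl⟩

theorem pastPairs_mono (X Y : ℕ → Ω → E) {i j : ℕ} (hij : i ≤ j) :
    pastPairs X Y i ≤ pastPairs X Y j := by
  rintro _ ⟨s, hs, rfl⟩
  exact ⟨(fun v k => v (Fin.castLE (by omega) k)) ⁻¹' s,
    measurable_pi_lambda _ (fun k => measurable_pi_apply _) hs, rfl⟩

theorem measurableSet_pastPairs_disjointed [LE E] (hle : MeasurableSet {p : E × E | p.1 ≤ p.2})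
    (X Y : ℕ → Ω → E) (i : ℕ) :
    MeasurableSet[pastPairs X Y i] (disjointed (fun n => {ω | X n ω ≤ Y n ω}) i) := by
  rw [disjointed_apply, Finset.sup_set_eq_biUnion]
  exact (measurableSet_pastPairs_preimage X Y le_rfl hle).diff
    (Finset.measurableSet_biUnion _ fun j hj =>
      measurableSet_pastPairs_preimage X Y (Finset.mem_Iio.mp hj).le hle)

variable [MeasurableSpace Ω]

theorem pastPairs_le {X Y : ℕ → Ω → E} (hX : ∀ n, Measurable (X n)) (hY : ∀ n, Measurable (Y n))
    (n : ℕ) : pastPairs X Y n ≤ ‹MeasurableSpace Ω› :=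
  (measurable_pi_lambda (fun ω (i : Fin (n + 1)) => (X i ω, Y i ω))
    fun i => (hX i).prodMk (hY i)).comap_le

def IsMarkovPair (μ : Measure Ω) (P : Kernel E E) (X Y : ℕ → Ω → E) : Prop :=
  ∀ (n : ℕ) (A B : Set E), MeasurableSet A → MeasurableSet B →
    (μ[fun ω => Set.indicator A (fun _ => (1 : ℝ)) (X (n + 1) ω) *
          Set.indicator B (fun _ => (1 : ℝ)) (Y (n + 1) ω) | pastPairs X Y n])
      =ᵐ[μ] fun ω => ((P (X n ω)) A).toReal * ((P (Y n ω)) B).toReal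

namespace IsMarkovPair

variable {μ : Measure Ω} [IsFiniteMeasure μ] {P : Kernel E E} [IsMarkovKernel P]
  {X Y : ℕ → Ω → E} (hM : IsMarkovPair μ P X Y) (hX : ∀ n, Measurable (X n))
  (hY : ∀ n, Measurable (Y n))
include hM hX hY

theorem restrict_preimage_inter_preimage_succ {n : ℕ} {S : Set Ω}
    (hS : MeasurableSet[pastPairs X Y n] S)
    {A B : Set E} (hA : MeasurableSet A) (hB : MeasurableSet B) :
    μ.restrict S (X (n + 1) ⁻¹' A ∩ Y (n + 1) ⁻¹' B)
      = ∫⁻ ω, P (X n ω) A * P (Y n ω) B ∂μ.restrict S := by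
  have hAB : MeasurableSet (X (n + 1) ⁻¹' A ∩ Y (n + 1) ⁻¹' B) := (hX _ hA).inter (hY _ hB)
  have hind : (fun ω => A.indicator (fun _ => (1 : ℝ)) (X (n + 1) ω) *
      B.indicator (fun _ => (1 : ℝ)) (Y (n + 1) ω))
      = (X (n + 1) ⁻¹' A ∩ Y (n + 1) ⁻¹' B).indicator 1 := by
    ext ω
    by_cases hxA : X (n + 1) ω ∈ A <;> by_cases hyB : Y (n + 1) ω ∈ B <;>
      simp [hxA, hyB]
  have hreal : ∫ ω in S, A.indicator (fun _ => (1 : ℝ)) (X (n + 1) ω) *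
      B.indicator (fun _ => (1 : ℝ)) (Y (n + 1) ω) ∂μ
      = ∫ ω in S, (P (X n ω) A).toReal * (P (Y n ω) B).toReal ∂μ := by
    rw [← setIntegral_condExp (pastPairs_le hX hY n) _ hS]
    · exact integral_congr_ae (ae_restrict_of_ae (hM n A B hA hB))
    · rw [hind]
      exact (integrable_const 1).indicator hAB
  have hle_one : ∀ ω, P (X n ω) A * P (Y n ω) B ≤ 1 := fun ω =>
    mul_le_one' prob_le_one prob_le_one
  have hmeas : Measurable fun ω => P (X n ω) A * P (Y n ω) B :=
    ((P.measurable_coe hA).comp (hX n)).mul ((P.measurable_coe hB).comp (hY n))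
  rw [hind, integral_indicator_one hAB] at hreal
  simp_rw [← ENNReal.toReal_mul] at hreal
  rw [integral_toReal hmeas.aemeasurable (Filter.Eventually.of_forall fun ω =>
    (hle_one ω).trans_lt ENNReal.one_lt_top)] at hreal
  refine (ENNReal.toReal_eq_toReal_iff' (measure_ne_top _ _) ?_).mp hreal
  exact (setLIntegral_lt_top_of_le_nnreal (measure_ne_top _ _)
    ⟨1, fun ω _ => by simpa using hle_one ω⟩).ne

theorem setIntegral_mul_succ {n : ℕ} {S : Set Ω} (hS : MeasurableSet[pastPairs X Y n] S)
    {g h : E → ℝ} (hg : Measurable g) (hh : Measurable h) {Cg Ch : ℝ}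
    (hgC : ∀ z, |g z| ≤ Cg) (hhC : ∀ z, |h z| ≤ Ch) :
    ∫ ω in S, g (X (n + 1) ω) * h (Y (n + 1) ω) ∂μ
      = ∫ ω in S, kernelOp P g (X n ω) * kernelOp P h (Y n ω) ∂μ :=
  integral_mul_eq_of_forall_rect (hX n) (hY n) (hX (n + 1)) (hY (n + 1))
    (fun _ _ hA hB => hM.restrict_preimage_inter_preimage_succ hX hY hS hA hB) hg hh hgC hhC

theorem setIntegral_mul_add {i : ℕ} {S : Set Ω} (hS : MeasurableSet[pastPairs X Y i] S) (k : ℕ)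
    {g h : E → ℝ} (hg : Measurable g) (hh : Measurable h) {Cg Ch : ℝ}
    (hgC : ∀ z, |g z| ≤ Cg) (hhC : ∀ z, |h z| ≤ Ch) :
    ∫ ω in S, g (X (i + k) ω) * h (Y (i + k) ω) ∂μ
      = ∫ ω in S, (kernelOp P)^[k] g (X i ω) * (kernelOp P)^[k] h (Y i ω) ∂μ := by
  induction k generalizing g h Cg Ch with
  | zero => rfl
  | succ k ih =>
    rw [← add_assoc,
      hM.setIntegral_mul_succ hX hY (pastPairs_mono X Y (Nat.le_add_right i k) _ hS)
        hg hh hgC hhC, ih (measurable_kernelOp P hg) (measurable_kernelOp P hh)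
      (abs_kernelOp_le P hgC) (abs_kernelOp_le P hhC)]
    rfl

theorem setIntegral_comp_le [Preorder E] (hP : IsOrderPreserving P) {i t : ℕ} (hit : i ≤ t)
    {S : Set Ω} (hS : MeasurableSet[pastPairs X Y i] S) (hle : ∀ ω ∈ S, X i ω ≤ Y i ω)
    {g : E → ℝ} (hg : Measurable g) {C : ℝ} (hgC : ∀ z, |g z| ≤ C) (hmono : Monotone g) :
    ∫ ω in S, g (X t ω) ∂μ ≤ ∫ ω in S, g (Y t ω) ∂μ := by
  obtain ⟨k, rfl⟩ := Nat.exists_eq_add_of_le hit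
  have hone : ∀ z : E, |(fun _ => (1 : ℝ)) z| ≤ 1 := fun _ => by simp
  have hX' := hM.setIntegral_mul_add hX hY hS k hg measurable_const hgC hone
  have hY' := hM.setIntegral_mul_add hX hY hS k measurable_const hg hone hgC
  simp only [mul_one, one_mul, kernelOp_iterate_const] at hX' hY'
  rw [hX', hY']
  have hint : ∀ Z : Ω → E, Measurable Z →
      IntegrableOn (fun ω => (kernelOp P)^[k] g (Z ω)) S μ := fun Z hZ =>
    Integrable.of_bound ((measurable_kernelOp_iterate P hg k).comp hZ).aestronglyMeasurable C
      (Filter.Eventually.of_forall fun ω => abs_kernelOp_iterate_le P hgC k (Z ω))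
  exact setIntegral_mono_on (hint _ (hX i)) (hint _ (hY i)) (pastPairs_le hX hY i _ hS)
    fun ω hω => hP.monotone_kernelOp_iterate hg hgC hmono k (hle ω hω)

end IsMarkovPair

end MarkovPair

theorem stmt_15_general {E : Type*} [MeasurableSpace E] [TopologicalSpace E] [PolishSpace E]
    [BorelSpace E] [PartialOrder E]
    (hclosed : IsClosed {pr : E × E | pr.1 ≤ pr.2})
    (P : Kernel E E) [IsMarkovKernel P]
    (horderpres : ∀ x y : E, x ≤ y → ∀ f : E → ℝ, Measurable f →
      (∃ C : ℝ, ∀ z, |f z| ≤ C) → Monotone f → ∫ z, f z ∂(P x) ≤ ∫ z, f z ∂(P y))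
    {Ω : Type*} [MeasurableSpace Ω] (μ : Measure Ω) [IsProbabilityMeasure μ]
    (X Y : ℕ → Ω → E) (hXmeas : ∀ n, Measurable (X n)) (hYmeas : ∀ n, Measurable (Y n))
    -- the pair `(X, Y)` is Markov with the product kernel `P ⊗ P`
    -- (i.e. `X` and `Y` are independent chains each with kernel `P`)
    (hMarkov : ∀ (n : ℕ) (A B : Set E), MeasurableSet A → MeasurableSet B →
      (μ[fun ω => Set.indicator A (fun _ => (1 : ℝ)) (X (n + 1) ω) *
            Set.indicator B (fun _ => (1 : ℝ)) (Y (n + 1) ω) |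
          MeasurableSpace.comap (fun ω (i : Fin (n + 1)) => (X i ω, Y i ω)) inferInstance])
        =ᵐ[μ] fun ω => ((P (X n ω)) A).toReal * ((P (Y n ω)) B).toReal)
    (x y : E) (t : ℕ) :
    -- `Law(η^x)` is stochastically dominated by `Law(η^y)`, where
    -- `η^x = X t` on `{τ ≤ t}`, `η^x = æ` on `{τ > t}` (and similarly for `η^y`),
    -- `τ = inf {n ≥ 0 : X n ≤ Y n}`; here `{τ ≤ t} = {∃ n ≤ t, X n ≤ Y n}`
    ∀ f : Option E → ℝ, Measurable f → (∃ C : ℝ, ∀ z, |f z| ≤ C) →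
      (∀ a b : Option E, extLE a b → f a ≤ f b) →
      ∫ ω, f (if ∃ n ≤ t, X n ω ≤ Y n ω then some (X t ω) else none) ∂μ
        ≤ ∫ ω, f (if ∃ n ≤ t, X n ω ≤ Y n ω then some (Y t ω) else none) ∂μ := by
  rintro f hf ⟨C, hC⟩ hfmono
  have hM : IsMarkovPair μ P X Y := hMarkov
  -- `D i` is the event `{τ = i}`
  set D := disjointed fun n => {ω | X n ω ≤ Y n ω}
  have hDpast : ∀ i, MeasurableSet[pastPairs X Y i] (D i) :=
    measurableSet_pastPairs_disjointed hclosed.measurableSet X Y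
  have hD : ∀ i, MeasurableSet (D i) := fun i => pastPairs_le hXmeas hYmeas i _ (hDpast i)
  have hmeet := setOf_exists_le_eq_biUnion_disjointed (fun n ω => X n ω ≤ Y n ω) t
  have hmeet_iff : ∀ ω, (∃ n ≤ t, X n ω ≤ Y n ω) ↔ ω ∈ ⋃ i ∈ Finset.range (t + 1), D i :=
    Set.ext_iff.mp hmeet
  have hsome : Measurable (some : E → Option E) := fun _ hs => hs
  have hint : ∀ Z : Ω → E, Measurable Z →
      Integrable (fun ω => f (if ∃ n ≤ t, X n ω ≤ Y n ω then some (Z ω) else none)) μ :=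
    fun Z hZ => .of_bound (hf.comp (Measurable.ite (hmeet ▸ Finset.measurableSet_biUnion _
      fun i _ => hD i) (hsome.comp hZ) measurable_const)).aestronglyMeasurable C
      (Filter.Eventually.of_forall fun _ => hC _)
  refine integral_le_integral_of_setIntegral_le (s := Finset.range (t + 1)) (fun i _ => hD i)
    (fun i _ j _ hij => disjoint_disjointed _ hij) (hint _ (hXmeas t)) (hint _ (hYmeas t)) ?_ ?_
  · intro ω hω
    rw [if_neg (mt (hmeet_iff ω).mp hω), if_neg (mt (hmeet_iff ω).mp hω)]
  · intro i hi
    have hon : ∀ Z : Ω → E,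
        ∫ ω in D i, f (if ∃ n ≤ t, X n ω ≤ Y n ω then some (Z ω) else none) ∂μ
          = ∫ ω in D i, f (some (Z ω)) ∂μ := fun Z =>
      setIntegral_congr_fun (hD i) fun ω hω => by
        rw [if_pos ((hmeet_iff ω).mpr (Set.mem_biUnion hi hω))]
    rw [hon, hon]
    exact hM.setIntegral_comp_le hXmeas hYmeas horderpres (Nat.lt_succ_iff.mp
      (Finset.mem_range.mp hi)) (hDpast i) (fun ω hω => disjointed_subset _ i hω) (hf.comp hsome)
      (fun _ => hC _) fun a b hab => hfmono (some a) (some b) hab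

theorem stmt_15 {E : Type*} [MeasurableSpace E] [TopologicalSpace E] [PolishSpace E]
    [BorelSpace E] [PartialOrder E]
    (hclosed : IsClosed {pr : E × E | pr.1 ≤ pr.2})
    (P : Kernel E E) [IsMarkovKernel P]
    (horderpres : ∀ x y : E, x ≤ y → ∀ f : E → ℝ, Measurable f →
      (∃ C : ℝ, ∀ z, |f z| ≤ C) → Monotone f → ∫ z, f z ∂(P x) ≤ ∫ z, f z ∂(P y))
    {Ω : Type*} [MeasurableSpace Ω] (μ : Measure Ω) [IsProbabilityMeasure μ]
    (X Y : ℕ → Ω → E) (hXmeas : ∀ n, Measurable (X n)) (hYmeas : ∀ n, Measurable (Y n))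
    -- the pair `(X, Y)` is Markov with the product kernel `P ⊗ P`
    -- (i.e. `X` and `Y` are independent chains each with kernel `P`)
    (hMarkov : ∀ (n : ℕ) (A B : Set E), MeasurableSet A → MeasurableSet B →
      (μ[fun ω => Set.indicator A (fun _ => (1 : ℝ)) (X (n + 1) ω) *
            Set.indicator B (fun _ => (1 : ℝ)) (Y (n + 1) ω) |
          MeasurableSpace.comap (fun ω (i : Fin (n + 1)) => (X i ω, Y i ω)) inferInstance])
        =ᵐ[μ] fun ω => ((P (X n ω)) A).toReal * ((P (Y n ω)) B).toReal)
    (x y : E) (hX0 : ∀ ω, X 0 ω = x) (hY0 : ∀ ω, Y 0 ω = y)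
    (t : ℕ) (ht : 0 < t) :
    -- `Law(η^x)` is stochastically dominated by `Law(η^y)`, where
    -- `η^x = X t` on `{τ ≤ t}`, `η^x = æ` on `{τ > t}` (and similarly for `η^y`),
    -- `τ = inf {n ≥ 0 : X n ≤ Y n}`; here `{τ ≤ t} = {∃ n ≤ t, X n ≤ Y n}`
    ∀ f : Option E → ℝ, Measurable f → (∃ C : ℝ, ∀ z, |f z| ≤ C) →
      (∀ a b : Option E, extLE a b → f a ≤ f b) →
      ∫ ω, f (if ∃ n ≤ t, X n ω ≤ Y n ω then some (X t ω) else none) ∂μ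
        ≤ ∫ ω, f (if ∃ n ≤ t, X n ω ≤ Y n ω then some (Y t ω) else none) ∂μ :=
  stmt_15_general hclosed P horderpres μ X Y hXmeas hYmeas hMarkov x y t
end
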